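/- arXiv:2311.14247 — 10 statements merged into one kernel-verified Lean document; each statement's English description precedes it below -/
import Mathlib

section
/- Let (X, dist) be a finite metric space, let μ and ν be probability distributions on X, and let Γ = {Γ_1, …, Γ_k} be a partition of X. Then EMD_dist(μ, ν) ≤ diam(X) · d_TV(μ_Γ, ν_Γ) + E_{x∼μ}[diam(Γ_{γ(x)})], where the expectation equals Σ_{i=1}^k μ[Γ_i] · diam(Γ_i). -/
/-!
Couple the cell masses `a = μ_Γ` and `b = ν_Γ` maximally: keep `min (a i) (b i)` on the diagonal
and couple the excesses `a - a ⊓ b`, `b - a ⊓ b`, whose common total mass is `d_TV(a, b)`,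
independently. Then lift this coupling to `X`, spreading the mass of a pair of cells `(i, j)` over
`Γ i × Γ j` proportionally to `μ` and `ν`. Diagonal mass travels at most `diam Γ i`, the rest at
most `diam X`.
-/

open Finset

noncomputable section

variable {α β ι κ : Type*} [Fintype α] [Fintype β]

structure IsCoupling (μ : α → ℝ) (ν : β → ℝ) (π : α × β → ℝ) : Prop where
  nonneg : ∀ q, 0 ≤ π q
  sum_fst : ∀ x, ∑ y, π (x, y) = μ x
  sum_snd : ∀ y, ∑ x, π (x, y) = ν y

def earthMoverDistance (μ : α → ℝ) (ν : β → ℝ) (c : α × β → ℝ) : ℝ :=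
  sInf {t : ℝ | ∃ π : α × β → ℝ, (∀ q, 0 ≤ π q) ∧ (∀ x, ∑ y, π (x, y) = μ x) ∧
    (∀ y, ∑ x, π (x, y) = ν y) ∧ t = ∑ q, π q * c q}

namespace IsCoupling

variable {μ μ' : α → ℝ} {ν ν' : β → ℝ} {π π' : α × β → ℝ}

theorem add (h : IsCoupling μ ν π) (h' : IsCoupling μ' ν' π') :
    IsCoupling (μ + μ') (ν + ν') (π + π') where
  nonneg q := add_nonneg (h.nonneg q) (h'.nonneg q)
  sum_fst x := by simp only [Pi.add_apply, sum_add_distrib, h.sum_fst, h'.sum_fst]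
  sum_snd y := by simp only [Pi.add_apply, sum_add_distrib, h.sum_snd, h'.sum_snd]

theorem sum_eq (h : IsCoupling μ ν π) : ∑ q, π q = ∑ x, μ x := by
  rw [Fintype.sum_prod_type]
  exact sum_congr rfl fun x _ => h.sum_fst x

theorem apply_eq_zero_of_left (h : IsCoupling μ ν π) {x : α} (hx : μ x = 0) (y : β) :
    π (x, y) = 0 :=
  (sum_eq_zero_iff_of_nonneg fun y _ => h.nonneg (x, y)).mp ((h.sum_fst x).trans hx) y (mem_univ y)

theorem apply_eq_zero_of_right (h : IsCoupling μ ν π) {y : β} (hy : ν y = 0) (x : α) :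
    π (x, y) = 0 :=
  (sum_eq_zero_iff_of_nonneg fun x _ => h.nonneg (x, y)).mp ((h.sum_snd y).trans hy) x (mem_univ x)

theorem sum_mul_le (h : IsCoupling μ ν π) {c : α × β → ℝ} {M : ℝ} (hc : ∀ q, c q ≤ M) :
    ∑ q, π q * c q ≤ M * ∑ x, μ x := by
  rw [← h.sum_eq, mul_sum]
  exact sum_le_sum fun q _ => by
    rw [mul_comm M]
    exact mul_le_mul_of_nonneg_left (hc q) (h.nonneg q)

theorem earthMoverDistance_le (h : IsCoupling μ ν π) {c : α × β → ℝ} (hc : ∀ q, 0 ≤ c q) :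
    earthMoverDistance μ ν c ≤ ∑ q, π q * c q := by
  refine csInf_le ⟨0, ?_⟩ ⟨π, h.nonneg, h.sum_fst, h.sum_snd, rfl⟩
  rintro _ ⟨π, hπ, -, -, rfl⟩
  exact sum_nonneg fun q _ => mul_nonneg (hπ q) (hc q)

end IsCoupling

theorem isCoupling_diagonal [DecidableEq α] {m : α → ℝ} (hm : ∀ x, 0 ≤ m x) :
    IsCoupling m m fun q => if q.1 = q.2 then m q.1 else 0 where
  nonneg q := by split_ifs <;> simp [hm]
  sum_fst x := by simp
  sum_snd y := by simp [eq_comm]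

theorem isCoupling_prod {μ : α → ℝ} {ν : β → ℝ} (hμ : ∀ x, 0 ≤ μ x) (hν : ∀ y, 0 ≤ ν y)
    (hμν : ∑ x, μ x = ∑ y, ν y) : IsCoupling μ ν fun q => μ q.1 * ν q.2 / ∑ x, μ x where
  nonneg q := div_nonneg (mul_nonneg (hμ _) (hν _)) (sum_nonneg fun x _ => hμ x)
  sum_fst x := by
    dsimp only
    rw [← sum_div, ← mul_sum, ← hμν]
    rcases eq_or_ne (∑ x, μ x) 0 with h | h
    · simp [(sum_eq_zero_iff_of_nonneg fun x _ => hμ x).mp h x (mem_univ x)]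
    · exact mul_div_cancel_right₀ _ h
  sum_snd y := by
    dsimp only
    rw [← sum_div, ← sum_mul, hμν]
    rcases eq_or_ne (∑ y, ν y) 0 with h | h
    · simp [(sum_eq_zero_iff_of_nonneg fun y _ => hν y).mp h y (mem_univ y)]
    · exact mul_div_cancel_left₀ _ h

section MaximalCoupling

variable [Fintype ι] {a b : ι → ℝ}

/-- If the excess `a - a ⊓ b` has total mass `0`, its product term is `0 / 0 = 0`, as it
should be. -/
def maximalCoupling [DecidableEq ι] (a b : ι → ℝ) : ι × ι → ℝ :=
  (fun q => if q.1 = q.2 then (a ⊓ b) q.1 else 0) +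
    fun q => (a - a ⊓ b) q.1 * (b - a ⊓ b) q.2 / ∑ i, (a - a ⊓ b) i

theorem sum_sub_inf_eq (h : ∑ i, a i = ∑ i, b i) :
    ∑ i, (a - a ⊓ b) i = ∑ i, (b - a ⊓ b) i := by
  simp only [Pi.sub_apply, sum_sub_distrib, h]

theorem sum_sub_inf_eq_half_sum_abs (h : ∑ i, a i = ∑ i, b i) :
    ∑ i, (a - a ⊓ b) i = 1 / 2 * ∑ i, |a i - b i| := by
  have habs : ∀ i, |a i - b i| = (a - a ⊓ b) i + (b - a ⊓ b) i := fun i => by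
    simp only [Pi.sub_apply, Pi.inf_apply]
    rw [abs_sub_comm, ← max_sub_min_eq_abs]
    linarith [min_add_max (a i) (b i)]
  rw [sum_congr rfl fun i _ => habs i, sum_add_distrib, ← sum_sub_inf_eq h]
  ring

theorem isCoupling_sub_inf (h : ∑ i, a i = ∑ i, b i) :
    IsCoupling (a - a ⊓ b) (b - a ⊓ b)
      fun q => (a - a ⊓ b) q.1 * (b - a ⊓ b) q.2 / ∑ i, (a - a ⊓ b) i :=
  isCoupling_prod (fun _ => sub_nonneg.mpr inf_le_left) (fun _ => sub_nonneg.mpr inf_le_right)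
    (sum_sub_inf_eq h)

theorem isCoupling_maximalCoupling [DecidableEq ι] (ha : ∀ i, 0 ≤ a i) (hb : ∀ i, 0 ≤ b i)
    (h : ∑ i, a i = ∑ i, b i) : IsCoupling a b (maximalCoupling a b) := by
  have := (isCoupling_diagonal (m := a ⊓ b) fun i => le_inf (ha i) (hb i)).add
    (isCoupling_sub_inf h)
  rwa [add_sub_cancel, add_sub_cancel] at this

theorem sum_maximalCoupling_mul_le [DecidableEq ι] (h : ∑ i, a i = ∑ i, b i) {c : ι × ι → ℝ}
    {M : ℝ} (hc : ∀ q, c q ≤ M) :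
    ∑ q, maximalCoupling a b q * c q ≤ ∑ i, (a ⊓ b) i * c (i, i) + M * ∑ i, (a - a ⊓ b) i := by
  have hdiag :
      ∑ q, (if q.1 = q.2 then (a ⊓ b) q.1 else 0) * c q = ∑ i, (a ⊓ b) i * c (i, i) := by
    simp [Fintype.sum_prod_type, ite_mul]
  simp only [maximalCoupling, Pi.add_apply, add_mul, sum_add_distrib, hdiag]
  gcongr
  exact (isCoupling_sub_inf h).sum_mul_le hc

end MaximalCoupling

section Lift

variable [DecidableEq ι] [DecidableEq κ] {γ : α → ι} {μ : α → ℝ}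

def pushforward (γ : α → ι) (μ : α → ℝ) (i : ι) : ℝ :=
  ∑ x with γ x = i, μ x

theorem pushforward_nonneg (hμ : ∀ x, 0 ≤ μ x) (i : ι) : 0 ≤ pushforward γ μ i :=
  sum_nonneg fun x _ => hμ x

theorem pushforward_mul_div_pushforward (hμ : ∀ x, 0 ≤ μ x) (x : α) :
    pushforward γ μ (γ x) * (μ x / pushforward γ μ (γ x)) = μ x := by
  rcases eq_or_ne (pushforward γ μ (γ x)) 0 with h | h
  · rw [(sum_eq_zero_iff_of_nonneg fun y _ => hμ y).mp h x (by simp), h, zero_mul]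
  · exact mul_div_cancel₀ _ h

theorem exists_pushforward_eq_sum_of_partition {Γ : ι → Finset α}
    (hdisj : ∀ i j, i ≠ j → Disjoint (Γ i) (Γ j)) (hcover : ∀ x, ∃ i, x ∈ Γ i) :
    ∃ γ : α → ι, (∀ x, x ∈ Γ (γ x)) ∧ ∀ (μ : α → ℝ) i, pushforward γ μ i = ∑ x ∈ Γ i, μ x := by
  choose γ hγ using hcover
  refine ⟨γ, hγ, fun μ i => congrArg (fun s => ∑ x ∈ s, μ x) (ext fun x => ?_)⟩
  simp only [mem_filter, mem_univ, true_and]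
  refine ⟨fun h => h ▸ hγ x, fun hx => by_contra fun hne => ?_⟩
  exact disjoint_left.mp (hdisj _ _ hne) (hγ x) hx

variable [Fintype ι] [Fintype κ]

theorem sum_pushforward (γ : α → ι) (μ : α → ℝ) : ∑ i, pushforward γ μ i = ∑ x, μ x :=
  sum_fiberwise _ _ _

theorem sum_mul_div_pushforward (f : ι → ℝ) (hf : ∀ i, pushforward γ μ i = 0 → f i = 0) :
    ∑ x, f (γ x) * (μ x / pushforward γ μ (γ x)) = ∑ i, f i := by
  rw [← sum_fiberwise univ γ]
  refine sum_congr rfl fun i _ => ?_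
  rw [sum_congr rfl fun x hx => by rw [(mem_filter.mp hx).2], ← mul_sum, ← sum_div]
  change f i * (pushforward γ μ i / pushforward γ μ i) = f i
  rcases eq_or_ne (pushforward γ μ i) 0 with h | h
  · rw [hf i h, zero_mul]
  · rw [div_self h, mul_one]

/-- Where a cell has mass `0`, the division by `0` is harmless: a coupling of the pushforwards
vanishes on the rows and columns of such cells. -/
def liftCoupling (γ : α → ι) (δ : β → κ) (μ : α → ℝ) (ν : β → ℝ) (ρ : ι × κ → ℝ) (q : α × β) :
    ℝ :=
  ρ (γ q.1, δ q.2) * (μ q.1 / pushforward γ μ (γ q.1)) * (ν q.2 / pushforward δ ν (δ q.2))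

variable {δ : β → κ} {ν : β → ℝ} {ρ : ι × κ → ℝ}

theorem sum_liftCoupling_mul (hρ : IsCoupling (pushforward γ μ) (pushforward δ ν) ρ)
    (g : ι × κ → ℝ) : ∑ q, liftCoupling γ δ μ ν ρ q * g (γ q.1, δ q.2) = ∑ p, ρ p * g p := by
  set A := pushforward γ μ
  set B := pushforward δ ν
  calc ∑ q, liftCoupling γ δ μ ν ρ q * g (γ q.1, δ q.2)
      = ∑ x, ∑ y, ρ (γ x, δ y) * g (γ x, δ y) * (μ x / A (γ x)) * (ν y / B (δ y)) := by
        rw [Fintype.sum_prod_type]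
        exact sum_congr rfl fun x _ => sum_congr rfl fun y _ => by simp only [liftCoupling]; ring
    _ = ∑ x, ∑ j, ρ (γ x, j) * g (γ x, j) * (μ x / A (γ x)) :=
        sum_congr rfl fun x _ =>
          sum_mul_div_pushforward (fun j => ρ (γ x, j) * g (γ x, j) * (μ x / A (γ x)))
            fun j hj => by rw [hρ.apply_eq_zero_of_right hj, zero_mul, zero_mul]
    _ = ∑ j, ∑ i, ρ (i, j) * g (i, j) := by
        rw [sum_comm]
        exact sum_congr rfl fun j _ =>
          sum_mul_div_pushforward (fun i => ρ (i, j) * g (i, j)) fun i hi => by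
            rw [hρ.apply_eq_zero_of_left hi, zero_mul]
    _ = ∑ p, ρ p * g p := by rw [Fintype.sum_prod_type, sum_comm]

theorem isCoupling_liftCoupling (hμ : ∀ x, 0 ≤ μ x) (hν : ∀ y, 0 ≤ ν y)
    (hρ : IsCoupling (pushforward γ μ) (pushforward δ ν) ρ) :
    IsCoupling μ ν (liftCoupling γ δ μ ν ρ) where
  nonneg q := mul_nonneg (mul_nonneg (hρ.nonneg _) (div_nonneg (hμ _) (pushforward_nonneg hμ _)))
    (div_nonneg (hν _) (pushforward_nonneg hν _))
  sum_fst x := calc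
    ∑ y, liftCoupling γ δ μ ν ρ (x, y)
        = ∑ y, ρ (γ x, δ y) * (μ x / pushforward γ μ (γ x)) * (ν y / pushforward δ ν (δ y)) := rfl
    _ = ∑ j, ρ (γ x, j) * (μ x / pushforward γ μ (γ x)) :=
        sum_mul_div_pushforward (fun j => ρ (γ x, j) * (μ x / pushforward γ μ (γ x))) fun j hj => by
          rw [hρ.apply_eq_zero_of_right hj, zero_mul]
    _ = μ x := by rw [← sum_mul, hρ.sum_fst, pushforward_mul_div_pushforward hμ]
  sum_snd y := calc
    ∑ x, liftCoupling γ δ μ ν ρ (x, y)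
        = ∑ x, ρ (γ x, δ y) * (ν y / pushforward δ ν (δ y)) * (μ x / pushforward γ μ (γ x)) :=
        sum_congr rfl fun x _ => mul_right_comm _ _ _
    _ = ∑ i, ρ (i, δ y) * (ν y / pushforward δ ν (δ y)) :=
        sum_mul_div_pushforward (fun i => ρ (i, δ y) * (ν y / pushforward δ ν (δ y))) fun i hi => by
          rw [hρ.apply_eq_zero_of_left hi, zero_mul]
    _ = ν y := by rw [← sum_mul, hρ.sum_snd, pushforward_mul_div_pushforward hν]

end Lift

section Partition

variable {X : Type*} [PseudoMetricSpace X] [DecidableEq ι] (Γ : ι → Finset X)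

def partitionCost (p : ι × ι) : ℝ :=
  if p.1 = p.2 then Metric.diam (Γ p.1 : Set X) else Metric.diam (Set.univ : Set X)

theorem dist_le_partitionCost [Finite X] {γ : X → ι} (hγ : ∀ x, x ∈ Γ (γ x)) (x y : X) :
    dist x y ≤ partitionCost Γ (γ x, γ y) := by
  by_cases h : γ x = γ y
  · rw [partitionCost, if_pos h]
    exact Metric.dist_le_diam_of_mem (Γ _).finite_toSet.isBounded (hγ x) (h ▸ hγ y)
  · rw [partitionCost, if_neg h]
    exact Metric.dist_le_diam_of_mem Set.finite_univ.isBounded trivial trivial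

theorem partitionCost_le_diam_univ [Finite X] (p : ι × ι) :
    partitionCost Γ p ≤ Metric.diam (Set.univ : Set X) := by
  rw [partitionCost]
  split_ifs
  · exact Metric.diam_mono (Set.subset_univ _) Set.finite_univ.isBounded
  · exact le_rfl

end Partition

end

/-- Let `(X, dist)` be a finite metric space, `μ, ν` probability
distributions on `X`, and `Γ = {Γ_1, …, Γ_k}` a partition of `X`. Then
`EMD(μ,ν) ≤ diam(X) · d_TV(μ_Γ, ν_Γ) + Σ_i μ[Γ_i] · diam(Γ_i)`,
where `EMD` is the infimum over couplings `π` of `μ` and `ν` of the expected distance. -/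
theorem emd_le_diam_tv_add_expected_diam
    {X : Type*} [MetricSpace X] [Fintype X] {k : ℕ}
    (μ ν : X → ℝ)
    (hμ0 : ∀ x, 0 ≤ μ x) (hμ1 : ∑ x, μ x = 1)
    (hν0 : ∀ x, 0 ≤ ν x) (hν1 : ∑ x, ν x = 1)
    (Γ : Fin k → Finset X)
    (hdisj : ∀ i j, i ≠ j → Disjoint (Γ i) (Γ j))
    (hcover : ∀ x : X, ∃ i, x ∈ Γ i) :
    sInf {c : ℝ | ∃ π : X × X → ℝ,
        (∀ q, 0 ≤ π q) ∧
        (∀ x, ∑ y, π (x, y) = μ x) ∧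
        (∀ y, ∑ x, π (x, y) = ν y) ∧
        c = ∑ q : X × X, π q * dist q.1 q.2} ≤
      Metric.diam (Set.univ : Set X) *
          ((1 / 2) * ∑ i, |(∑ x ∈ Γ i, μ x) - ∑ x ∈ Γ i, ν x|) +
        ∑ i, (∑ x ∈ Γ i, μ x) * Metric.diam (Γ i : Set X) := by
  obtain ⟨γ, hγ, hcell⟩ := exists_pushforward_eq_sum_of_partition hdisj hcover
  set a := pushforward γ μ
  set b := pushforward γ ν
  have hab : ∑ i, a i = ∑ i, b i := by rw [sum_pushforward, sum_pushforward, hμ1, hν1]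
  have hρ := isCoupling_maximalCoupling (pushforward_nonneg hμ0) (pushforward_nonneg hν0) hab
  have hπ := isCoupling_liftCoupling hμ0 hν0 hρ
  calc earthMoverDistance μ ν (fun q : X × X => dist q.1 q.2)
      ≤ ∑ q, liftCoupling γ γ μ ν (maximalCoupling a b) q * dist q.1 q.2 :=
        hπ.earthMoverDistance_le fun _ => dist_nonneg
    _ ≤ ∑ p, maximalCoupling a b p * partitionCost Γ p := by
        rw [← sum_liftCoupling_mul hρ]
        exact sum_le_sum fun q _ =>
          mul_le_mul_of_nonneg_left (dist_le_partitionCost Γ hγ _ _) (hπ.nonneg q)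
    _ ≤ ∑ i, (a ⊓ b) i * partitionCost Γ (i, i) +
          Metric.diam (Set.univ : Set X) * ∑ i, (a - a ⊓ b) i :=
        sum_maximalCoupling_mul_le hab (partitionCost_le_diam_univ Γ)
    _ ≤ _ := by
        rw [sum_sub_inf_eq_half_sum_abs hab, add_comm]
        simp only [a, b, hcell, partitionCost, if_true]
        gcongr with i
        exact inf_le_left.trans_eq (hcell μ i)
end

section
/- Let (X, dist) be a finite metric space and let (Γ^(1), …, Γ^(t)) be a hierarchical clustering of X (each Γ^(i+1) is a refinement of the partition Γ^(i)) with diameter bounds δ_1, …, δ_t, i.e. every cell of Γ^(i) has diameter at most δ_i; set δ_0 = diam(X). Then for every pair of probability distributions μ, ν on X: EMD_dist(μ, ν) ≤ Σ_{i=1}^t δ_{i−1} · d_TV(μ_{Γ^(i)}, ν_{Γ^(i)}) + E_{x∼μ}[diam(Γ^(t)_{γ^(t)(x)})], where γ^(t)(x) is the index of the cell of Γ^(t) containing x. -/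
/-!
The coupling is built greedily, from the finest level up. Inside each cell of a partition, `f` is
matched against `h` proportionally (`x` and `y` in a common cell are paired with weight
`f x * h y / max F H`, where `F`, `H` are the masses of the cell), which moves `min F H` within the
cell at cost at most its diameter per unit. The unmatched remainder has total mass `d_TV(f_Γ, h_Γ)`,
and, because the matching never leaves a cell, the remainders of `f` and `h` still have the same
mass differences on every coarser cell, hence the same total variation distances there. So the
remainder of level `i` is matched within the cells of level `i - 1`, at cost at most `δ i` per
unit, and the remainder of the coarsest level is coupled arbitrarily at cost at most `diam X = δ 0`
per unit.
-/

open Finset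

lemma mul_div_max_eq_min {K : Type*} [Field K] [LinearOrder K] [IsStrictOrderedRing K] {a b : K}
    (ha : 0 ≤ a) (hb : 0 ≤ b) : a * b / max a b = min a b := by
  rcases (le_max_of_le_left ha).eq_or_lt' with h0 | h0
  · rw [h0, div_zero]
    exact le_antisymm (h0 ▸ min_le_max) (le_min ha hb) |>.symm
  · rw [← min_mul_max a b, mul_div_cancel_right₀ _ h0.ne']

section Coupling

variable {X : Type*} [Fintype X]

structure IsCoupling_s1 (π : X × X → ℝ) (f h : X → ℝ) : Prop where
  nonneg : ∀ q, 0 ≤ π q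
  marginal_fst : ∀ x, ∑ y, π (x, y) = f x
  marginal_snd : ∀ y, ∑ x, π (x, y) = h y

def transportCost [PseudoMetricSpace X] (π : X × X → ℝ) : ℝ :=
  ∑ q, π q * dist q.1 q.2

variable {π π' : X × X → ℝ} {f h f' h' : X → ℝ}

lemma IsCoupling_s1.zero : IsCoupling_s1 (0 : X × X → ℝ) 0 0 :=
  ⟨fun _ => le_rfl, fun _ => by simp, fun _ => by simp⟩

lemma IsCoupling_s1.add (hπ : IsCoupling_s1 π f h) (hπ' : IsCoupling_s1 π' f' h') :
    IsCoupling_s1 (π + π') (f + f') (h + h') where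
  nonneg q := add_nonneg (hπ.nonneg q) (hπ'.nonneg q)
  marginal_fst x := by simp [sum_add_distrib, hπ.marginal_fst, hπ'.marginal_fst]
  marginal_snd y := by simp [sum_add_distrib, hπ.marginal_snd, hπ'.marginal_snd]

lemma IsCoupling_s1.sum_filter_eq (hπ : IsCoupling_s1 π f h) (p : X → Prop) [DecidablePred p]
    (hp : ∀ x y, π (x, y) ≠ 0 → (p x ↔ p y)) :
    ∑ x with p x, f x = ∑ y with p y, h y := by
  have htransfer : ∀ x y, (if p x then π (x, y) else 0) = if p y then π (x, y) else 0 := by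
    intro x y
    by_cases hxy : π (x, y) = 0
    · simp [hxy]
    · simp only [hp x y hxy]
  calc ∑ x with p x, f x = ∑ x, ∑ y, if p x then π (x, y) else 0 := by
        rw [sum_filter]; congr! 1 with x; split_ifs <;> simp [hπ.marginal_fst]
    _ = ∑ y, ∑ x, if p y then π (x, y) else 0 :=
        (sum_congr rfl fun x _ => sum_congr rfl fun y _ => htransfer x y).trans sum_comm
    _ = ∑ y with p y, h y := by
        rw [sum_filter]; congr! 1 with y; split_ifs <;> simp [hπ.marginal_snd]

lemma IsCoupling_s1.sum_eq (hπ : IsCoupling_s1 π f h) : ∑ x, f x = ∑ y, h y := by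
  simpa using hπ.sum_filter_eq (fun _ => True) (fun _ _ _ => Iff.rfl)

lemma transportCost_add [PseudoMetricSpace X] :
    transportCost (π + π') = transportCost π + transportCost π' := by
  simp [transportCost, add_mul, sum_add_distrib]

lemma IsCoupling_s1.transportCost_le [PseudoMetricSpace X] (hπ : IsCoupling_s1 π f h) (r : X → ℝ)
    (hr : ∀ x y, π (x, y) ≠ 0 → dist x y ≤ r x) :
    transportCost π ≤ ∑ x, f x * r x := by
  rw [transportCost, Fintype.sum_prod_type]
  refine sum_le_sum fun x _ => ?_
  calc ∑ y, π (x, y) * dist x y ≤ ∑ y, π (x, y) * r x := by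
        refine sum_le_sum fun y _ => ?_
        by_cases hxy : π (x, y) = 0
        · simp [hxy]
        · exact mul_le_mul_of_nonneg_left (hr x y hxy) (hπ.nonneg _)
    _ = f x * r x := by rw [← sum_mul, hπ.marginal_fst]

lemma IsCoupling_s1.sInf_le_transportCost [PseudoMetricSpace X] (hπ : IsCoupling_s1 π f h) :
    sInf {c : ℝ | ∃ π : X × X → ℝ,
        (∀ q, 0 ≤ π q) ∧
        (∀ x, ∑ y, π (x, y) = f x) ∧
        (∀ y, ∑ x, π (x, y) = h y) ∧
        c = ∑ q : X × X, π q * dist q.1 q.2} ≤ transportCost π := by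
  refine csInf_le ⟨0, ?_⟩ ⟨π, hπ.nonneg, hπ.marginal_fst, hπ.marginal_snd, rfl⟩
  rintro c ⟨π', hπ'0, -, -, rfl⟩
  exact sum_nonneg fun q _ => mul_nonneg (hπ'0 q) dist_nonneg

end Coupling

section CellMatching

variable {X β : Type*} [Fintype X] [DecidableEq β]

def cellMass (g : X → β) (f : X → ℝ) (b : β) : ℝ :=
  ∑ x with g x = b, f x

noncomputable def cellTV (g : X → β) (f h : X → ℝ) : ℝ :=
  (1 / 2) * ∑ b ∈ univ.image g, |cellMass g f b - cellMass g h b|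

noncomputable def matched (g : X → β) (f h : X → ℝ) (x : X) : ℝ :=
  f x * cellMass g h (g x) / max (cellMass g f (g x)) (cellMass g h (g x))

noncomputable def unmatched (g : X → β) (f h : X → ℝ) : X → ℝ :=
  f - matched g f h

noncomputable def matchCoupling (g : X → β) (f h : X → ℝ) (q : X × X) : ℝ :=
  if g q.1 = g q.2 then
    f q.1 * h q.2 / max (cellMass g f (g q.1)) (cellMass g h (g q.1))
  else 0

variable {g : X → β} {f h : X → ℝ}

lemma cellTV_nonneg : 0 ≤ cellTV g f h := by
  unfold cellTV
  positivity

lemma cellMass_nonneg (hf : 0 ≤ f) (b : β) : 0 ≤ cellMass g f b :=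
  sum_nonneg fun x _ => hf x

lemma cellMass_sub (f h : X → ℝ) (b : β) :
    cellMass g (f - h) b = cellMass g f b - cellMass g h b :=
  sum_sub_distrib f h

lemma sum_eq_sum_cellMass (g : X → β) (f : X → ℝ) :
    ∑ x, f x = ∑ b ∈ univ.image g, cellMass g f b :=
  (sum_fiberwise_of_maps_to (fun x _ => mem_image_of_mem g (mem_univ x)) f).symm

lemma matched_le (hf : 0 ≤ f) : matched g f h ≤ f := fun x => by
  rw [matched, mul_div_assoc]
  exact mul_le_of_le_one_right (hf x) (div_le_one_of_le₀ (le_max_right _ _)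
    (le_max_of_le_left (cellMass_nonneg hf _)))

lemma cellMass_matched (hf : 0 ≤ f) (hh : 0 ≤ h) (b : β) :
    cellMass g (matched g f h) b = min (cellMass g f b) (cellMass g h b) := by
  have hcell : ∀ x ∈ univ.filter (g · = b),
      matched g f h x = f x * (cellMass g h b / max (cellMass g f b) (cellMass g h b)) := by
    intro x hx
    rw [matched, (mem_filter.1 hx).2, mul_div_assoc]
  rw [cellMass, sum_congr rfl hcell, ← sum_mul, ← mul_div_assoc]
  exact mul_div_max_eq_min (cellMass_nonneg hf b) (cellMass_nonneg hh b)

lemma isCoupling_matchCoupling (hf : 0 ≤ f) (hh : 0 ≤ h) :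
    IsCoupling_s1 (matchCoupling g f h) (matched g f h) (matched g h f) where
  nonneg q := by
    unfold matchCoupling
    split_ifs
    · exact div_nonneg (mul_nonneg (hf _) (hh _)) (le_max_of_le_left (cellMass_nonneg hf _))
    · exact le_rfl
  marginal_fst x := by
    have hrow : ∀ y, matchCoupling g f h (x, y) = if g y = g x then
        f x * h y / max (cellMass g f (g x)) (cellMass g h (g x)) else 0 := fun y => by
      simp only [matchCoupling, eq_comm]
    simp only [hrow, ← sum_filter, mul_div_assoc, ← mul_sum, ← sum_div]
    rw [matched, mul_div_assoc]
    rfl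
  marginal_snd y := by
    have hcol : ∀ x, matchCoupling g f h (x, y) = if g x = g y then
        f x * h y / max (cellMass g f (g y)) (cellMass g h (g y)) else 0 := fun x => by
      unfold matchCoupling; split_ifs with hxy <;> simp only [hxy]
    simp only [hcol, ← sum_filter, ← sum_mul, ← sum_div]
    rw [matched, max_comm, mul_comm]
    rfl

lemma eq_of_matchCoupling_ne_zero {x y : X} (hxy : matchCoupling g f h (x, y) ≠ 0) :
    g x = g y := by
  by_contra hne
  exact hxy (if_neg hne)

lemma transportCost_matchCoupling_le [PseudoMetricSpace X] (hf : 0 ≤ f) (hh : 0 ≤ h) :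
    transportCost (matchCoupling g f h) ≤ ∑ x, f x * Metric.diam {y | g y = g x} := by
  have hcell : ∀ x y, matchCoupling g f h (x, y) ≠ 0 → dist x y ≤ Metric.diam {z | g z = g x} :=
    fun x y hxy => Metric.dist_le_diam_of_mem (Set.toFinite _).isBounded rfl
      (eq_of_matchCoupling_ne_zero hxy).symm
  calc transportCost (matchCoupling g f h)
      ≤ ∑ x, matched g f h x * Metric.diam {y | g y = g x} :=
        (isCoupling_matchCoupling hf hh).transportCost_le _ hcell
    _ ≤ ∑ x, f x * Metric.diam {y | g y = g x} :=
        sum_le_sum fun x _ => mul_le_mul_of_nonneg_right (matched_le hf x) Metric.diam_nonneg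

lemma unmatched_nonneg (hf : 0 ≤ f) : 0 ≤ unmatched g f h :=
  sub_nonneg.2 (matched_le hf)

lemma cellMass_unmatched (hf : 0 ≤ f) (hh : 0 ≤ h) (b : β) :
    cellMass g (unmatched g f h) b = cellMass g f b - min (cellMass g f b) (cellMass g h b) := by
  rw [unmatched, cellMass_sub, cellMass_matched hf hh]

lemma sum_unmatched_comm (hf : 0 ≤ f) (hh : 0 ≤ h) (hfh : ∑ x, f x = ∑ x, h x) :
    ∑ x, unmatched g f h x = ∑ x, unmatched g h f x := by
  simp only [unmatched, Pi.sub_apply, sum_sub_distrib, hfh,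
    (isCoupling_matchCoupling (g := g) hf hh).sum_eq]

lemma sum_unmatched (hf : 0 ≤ f) (hh : 0 ≤ h) (hfh : ∑ x, f x = ∑ x, h x) :
    ∑ x, unmatched g f h x = cellTV g f h := by
  have hboth : ∑ x, unmatched g f h x + ∑ x, unmatched g h f x
      = ∑ b ∈ univ.image g, |cellMass g f b - cellMass g h b| := by
    rw [sum_eq_sum_cellMass g, sum_eq_sum_cellMass g, ← sum_add_distrib]
    refine sum_congr rfl fun b _ => ?_
    rw [cellMass_unmatched hf hh, cellMass_unmatched hh hf, min_comm (cellMass g h b),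
      abs_sub_comm, ← max_sub_min_eq_abs]
    linarith [min_add_max (cellMass g f b) (cellMass g h b)]
  rw [cellTV]
  linarith [sum_unmatched_comm (g := g) hf hh hfh]

lemma exists_isCoupling_of_isCoupling_unmatched [PseudoMetricSpace X] (hf : 0 ≤ f) (hh : 0 ≤ h)
    {C : ℝ} (hres : ∃ π, IsCoupling_s1 π (unmatched g f h) (unmatched g h f) ∧
      transportCost π ≤ C) :
    ∃ π, IsCoupling_s1 π f h ∧ transportCost π ≤ C + ∑ x, f x * Metric.diam {y | g y = g x} := by
  obtain ⟨π, hπ, hcost⟩ := hres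
  refine ⟨matchCoupling g f h + π, ?_, ?_⟩
  · simpa [unmatched] using (isCoupling_matchCoupling (g := g) hf hh).add hπ
  · rw [transportCost_add]
    linarith [transportCost_matchCoupling_le (g := g) hf hh]

variable {β' : Type*} [DecidableEq β'] {g' : X → β'}

lemma cellMass_matched_eq_of_refines (hg : ∀ x y, g x = g y → g' x = g' y)
    (hf : 0 ≤ f) (hh : 0 ≤ h) (b : β') :
    cellMass g' (matched g f h) b = cellMass g' (matched g h f) b :=
  (isCoupling_matchCoupling hf hh).sum_filter_eq (g' · = b) fun x y hxy => by
    rw [hg x y (eq_of_matchCoupling_ne_zero hxy)]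

lemma cellTV_unmatched_of_refines (hg : ∀ x y, g x = g y → g' x = g' y)
    (hf : 0 ≤ f) (hh : 0 ≤ h) :
    cellTV g' (unmatched g f h) (unmatched g h f) = cellTV g' f h := by
  unfold cellTV unmatched
  congr 1
  refine sum_congr rfl fun b _ => ?_
  rw [cellMass_sub, cellMass_sub, cellMass_matched_eq_of_refines hg hf hh,
    sub_sub_sub_cancel_right]

end CellMatching

lemma refines_of_le {X β : Type*} {γ : ℕ → X → β} {t : ℕ}
    (hrefine : ∀ i, i + 1 < t → ∀ x y, γ (i + 1) x = γ (i + 1) y → γ i x = γ i y)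
    {i j : ℕ} (hij : i ≤ j) (hj : j < t) (x y : X) (hxy : γ j x = γ j y) : γ i x = γ i y := by
  induction j, hij using Nat.le_induction with
  | base => exact hxy
  | succ j _ ih => exact ih (by omega) (hrefine j hj x y hxy)

section Hierarchy

variable {X β : Type*} [Fintype X] [PseudoMetricSpace X] {f h : X → ℝ}

lemma exists_isCoupling_transportCost_le_diam_mul (hf : 0 ≤ f) (hh : 0 ≤ h)
    (hfh : ∑ x, f x = ∑ x, h x) :
    ∃ π, IsCoupling_s1 π f h ∧ transportCost π ≤ Metric.diam (Set.univ : Set X) * ∑ x, f x := by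
  -- on the one-cell partition `f` and `h` have the same mass, so matching leaves nothing over
  let g : X → Unit := fun _ => ()
  have hTV : ∀ {u v : X → ℝ}, ∑ x, u x = ∑ x, v x → cellTV g u v = 0 := fun huv => by
    simp [cellTV, cellMass, g, huv]
  have hres : ∀ {u v : X → ℝ}, 0 ≤ u → 0 ≤ v → ∑ x, u x = ∑ x, v x →
      unmatched g u v = 0 := fun hu hv huv =>
    (Fintype.sum_eq_zero_iff_of_nonneg (unmatched_nonneg hu)).1
      ((sum_unmatched hu hv huv).trans (hTV huv))
  obtain ⟨π, hπ, hcost⟩ := exists_isCoupling_of_isCoupling_unmatched (g := g) hf hh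
    ⟨0, by simpa [hres hf hh hfh, hres hh hf hfh.symm] using IsCoupling_s1.zero, le_rfl⟩
  refine ⟨π, hπ, hcost.trans_eq ?_⟩
  simp [g, transportCost, sum_mul, mul_comm]

theorem exists_isCoupling_transportCost_le_of_hierarchy [DecidableEq β]
    (γ : ℕ → X → β) (δ : ℕ → ℝ) (hδ0 : Metric.diam (Set.univ : Set X) ≤ δ 0)
    {t : ℕ} (ht : 1 ≤ t)
    (hrefine : ∀ i, i + 1 < t → ∀ x y, γ (i + 1) x = γ (i + 1) y → γ i x = γ i y)
    (hdiam : ∀ i, i + 1 < t → ∀ x, Metric.diam {y | γ i y = γ i x} ≤ δ (i + 1))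
    (hf : 0 ≤ f) (hh : 0 ≤ h) (hfh : ∑ x, f x = ∑ x, h x) :
    ∃ π, IsCoupling_s1 π f h ∧ transportCost π ≤
      ∑ i ∈ range t, δ i * cellTV (γ i) f h +
        ∑ x, f x * Metric.diam {y | γ (t - 1) y = γ (t - 1) x} := by
  induction t, ht using Nat.le_induction generalizing f h with
  | base =>
    refine exists_isCoupling_of_isCoupling_unmatched hf hh ?_
    obtain ⟨π, hπ, hcost⟩ := exists_isCoupling_transportCost_le_diam_mul
      (unmatched_nonneg hf) (unmatched_nonneg hh) (sum_unmatched_comm (g := γ 0) hf hh hfh)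
    refine ⟨π, hπ, hcost.trans ?_⟩
    rw [sum_unmatched hf hh hfh, sum_range_one]
    exact mul_le_mul_of_nonneg_right hδ0 cellTV_nonneg
  | succ t ht ih =>
    refine exists_isCoupling_of_isCoupling_unmatched (g := γ t) hf hh ?_
    obtain ⟨π, hπ, hcost⟩ := ih (fun i hi => hrefine i (by omega)) (fun i hi => hdiam i (by omega))
      (unmatched_nonneg hf) (unmatched_nonneg hh) (sum_unmatched_comm (g := γ t) hf hh hfh)
    refine ⟨π, hπ, hcost.trans ?_⟩
    have hcoarse : ∀ i ∈ range t,
        δ i * cellTV (γ i) (unmatched (γ t) f h) (unmatched (γ t) h f) = δ i * cellTV (γ i) f h :=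
      fun i hi => by
        rw [cellTV_unmatched_of_refines
          (refines_of_le hrefine (mem_range.1 hi).le (lt_add_one t)) hf hh]
    have hlast : ∑ x, unmatched (γ t) f h x * Metric.diam {y | γ (t - 1) y = γ (t - 1) x}
        ≤ δ t * cellTV (γ t) f h := by
      rw [← sum_unmatched (g := γ t) hf hh hfh, mul_sum]
      refine sum_le_sum fun x _ => ?_
      rw [mul_comm (δ t)]
      refine mul_le_mul_of_nonneg_left ?_ (unmatched_nonneg hf x)
      simpa [Nat.sub_add_cancel ht] using hdiam (t - 1) (by omega) x
    rw [sum_congr rfl hcoarse, sum_range_succ]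
    linarith

end Hierarchy

/-- Let `(X, dist)` be a finite metric space and let
`Γ^(1), …, Γ^(t)` (here `γ 0, …, γ (t-1)`, with the cell of `x` at level `i` being
the fiber `{y | γ i y = γ i x}`) be a hierarchical clustering of `X`, i.e. each level
refines the previous one, with diameter bounds `δ 1, …, δ t` (every cell of level `i`
has diameter at most `δ (i+1)`), and `δ 0 = diam X`.  Then for all probability
distributions `μ, ν` on `X`,
`EMD(μ,ν) ≤ Σ_{i=0}^{t-1} δ i · d_TV(μ_{γ i}, ν_{γ i}) + E_{x∼μ}[diam(cell_{t-1}(x))]`. -/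
theorem emd_le_hierarchical_clustering_bound
    {X : Type*} [MetricSpace X] [Fintype X]
    (μ ν : X → ℝ)
    (hμ0 : ∀ x, 0 ≤ μ x) (hμ1 : ∑ x, μ x = 1)
    (hν0 : ∀ x, 0 ≤ ν x) (hν1 : ∑ x, ν x = 1)
    (t : ℕ) (ht : 1 ≤ t)
    (γ : ℕ → X → ℕ) (δ : ℕ → ℝ)
    (hδ0 : δ 0 = Metric.diam (Set.univ : Set X))
    (hrefine : ∀ i, i + 1 < t → ∀ x y : X, γ (i + 1) x = γ (i + 1) y → γ i x = γ i y)
    (hdiam : ∀ i < t, ∀ x : X, Metric.diam {y | γ i y = γ i x} ≤ δ (i + 1)) :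
    sInf {c : ℝ | ∃ π : X × X → ℝ,
        (∀ q, 0 ≤ π q) ∧
        (∀ x, ∑ y, π (x, y) = μ x) ∧
        (∀ y, ∑ x, π (x, y) = ν y) ∧
        c = ∑ q : X × X, π q * dist q.1 q.2} ≤
      (∑ i ∈ Finset.range t, δ i *
          ((1 / 2) * ∑ v ∈ Finset.univ.image (γ i),
            |(∑ x ∈ Finset.univ.filter (fun x => γ i x = v), μ x) -
              ∑ x ∈ Finset.univ.filter (fun x => γ i x = v), ν x|)) +
        ∑ x : X, μ x * Metric.diam {y | γ (t - 1) y = γ (t - 1) x} := by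
  obtain ⟨π, hπ, hcost⟩ := exists_isCoupling_transportCost_le_of_hierarchy γ δ hδ0.ge ht hrefine
    (fun i hi => hdiam i (by omega)) hμ0 hν0 (hμ1.trans hν1.symm)
  exact hπ.sInf_le_transportCost.trans hcost
end

section
/- Let X ⊂ ℝ^d be a bounded set, let p ≥ 1, and equip X with the normalized ℓ_p metric dist(x,y) = ‖x−y‖_p / d^{1/p}. Let μ and ν be Borel probability measures on X, and let (Γ^(1), …, Γ^(t)) be a hierarchical clustering of X (each Γ^(i+1) refining Γ^(i)) whose cells are all μ- and ν-measurable, with diameter bounds δ_1, …, δ_t (every cell of Γ^(i) has diameter at most δ_i); set δ_0 = diam(X). Then EMD_dist(μ, ν) ≤ Σ_{i=1}^t δ_{i−1} · d_TV(μ_{Γ^(i)}, ν_{Γ^(i)}) + E_{x∼μ}[diam(Γ^(t)_{γ^(t)(x)})], where γ^(t)(x) is the index of the cell of Γ^(t) containing x. -/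
/-!
Couple `μ` and `ν` greedily, from the finest level of the clustering to the coarsest. Inside
each cell `C` of the current level, a mass `min (μ C) (ν C)` is transported by a rescaled product
coupling, at cost at most `diam C` per unit. This plan moves no mass between cells of the current
or of any coarser level, so the leftover measures have the same total variation as `μ` and `ν` on
every coarser level, and their total mass is the total variation at the current level. Matched at
the next coarser level (or, after level `0`, by a product coupling on `X`), the leftover of level
`i` travels at most `δ i`, which accounts for the term `δ i · d_TV` of the bound.
-/

open scoped BigOperators
open MeasureTheory

/-- The normalized `ℓ_p` distance on `ℝ^d`: `dist(x,y) = ‖x−y‖_p / d^{1/p}`. -/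
noncomputable def lpNormalizedDist (d : ℕ) (p : ℝ) (x y : Fin d → ℝ) : ℝ :=
  (∑ i, |x i - y i| ^ p) ^ (1 / p) / (d : ℝ) ^ (1 / p)

/-- Diameter of a set with respect to the normalized `ℓ_p` distance. -/
noncomputable def lpNormalizedDiam (d : ℕ) (p : ℝ) (S : Set (Fin d → ℝ)) : ℝ :=
  sSup {r : ℝ | ∃ x ∈ S, ∃ y ∈ S, r = lpNormalizedDist d p x y}

open Set Function
open scoped ENNReal

section Transport

variable {α : Type*} [MeasurableSpace α]

/-- Plans are only required to be finite measures, so that partial plans can be added. -/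
def TransportCostLE (c : α → α → ℝ) (μ ν : Measure α) (B : ℝ) : Prop :=
  ∃ π : Measure (α × α), IsFiniteMeasure π ∧ π.map Prod.fst = μ ∧ π.map Prod.snd = ν ∧
    Integrable (fun q => c q.1 q.2) π ∧ ∫ q, c q.1 q.2 ∂π ≤ B

noncomputable def earthMoverDist (c : α → α → ℝ) (μ ν : Measure α) : ℝ :=
  sInf {r : ℝ | ∃ π : Measure (α × α), IsProbabilityMeasure π ∧
    π.map Prod.fst = μ ∧ π.map Prod.snd = ν ∧ r = ∫ q, c q.1 q.2 ∂π}

variable {c : α → α → ℝ} {μ ν μ₁ ν₁ μ₂ ν₂ : Measure α} {B B₁ B₂ : ℝ}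

theorem TransportCostLE.mono (h : TransportCostLE c μ ν B₁) (hB : B₁ ≤ B₂) :
    TransportCostLE c μ ν B₂ :=
  let ⟨π, hπ, hμ, hν, hint, hle⟩ := h
  ⟨π, hπ, hμ, hν, hint, hle.trans hB⟩

theorem TransportCostLE.add (h₁ : TransportCostLE c μ₁ ν₁ B₁) (h₂ : TransportCostLE c μ₂ ν₂ B₂) :
    TransportCostLE c (μ₁ + μ₂) (ν₁ + ν₂) (B₁ + B₂) := by
  obtain ⟨π₁, _, hμ₁, hν₁, hint₁, hle₁⟩ := h₁
  obtain ⟨π₂, _, hμ₂, hν₂, hint₂, hle₂⟩ := h₂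
  refine ⟨π₁ + π₂, inferInstance, ?_, ?_, hint₁.add_measure hint₂, ?_⟩
  · rw [Measure.map_add _ _ measurable_fst, hμ₁, hμ₂]
  · rw [Measure.map_add _ _ measurable_snd, hν₁, hν₂]
  · rw [integral_add_measure hint₁ hint₂]
    exact add_le_add hle₁ hle₂

theorem earthMoverDist_le_of_transportCostLE [IsProbabilityMeasure μ] (hc₀ : ∀ x y, 0 ≤ c x y)
    (h : TransportCostLE c μ ν B) : earthMoverDist c μ ν ≤ B := by
  obtain ⟨π, _, hμ, hν, _, hle⟩ := h
  have : IsProbabilityMeasure π := ⟨by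
    rw [← measure_univ (μ := μ), ← hμ, Measure.map_apply measurable_fst MeasurableSet.univ,
      preimage_univ]⟩
  calc earthMoverDist c μ ν ≤ ∫ q, c q.1 q.2 ∂π := csInf_le ?_ ⟨π, this, hμ, hν, rfl⟩
    _ ≤ B := hle
  refine ⟨0, ?_⟩
  rintro r ⟨π', -, -, -, rfl⟩
  exact integral_nonneg fun q => hc₀ q.1 q.2

theorem integrable_and_integral_le_of_ae_le {β : Type*} [MeasurableSpace β] {π : Measure β}
    [IsFiniteMeasure π] {f : β → ℝ} (hf : Measurable f) (hf₀ : ∀ q, 0 ≤ f q) {D : ℝ}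
    (hD : ∀ᵐ q ∂π, f q ≤ D) : Integrable f π ∧ ∫ q, f q ∂π ≤ (π univ).toReal * D := by
  have hnorm : ∀ᵐ q ∂π, ‖f q‖ ≤ D := by
    filter_upwards [hD] with q hq
    rwa [Real.norm_of_nonneg (hf₀ q)]
  refine ⟨Integrable.of_bound hf.aestronglyMeasurable D hnorm, ?_⟩
  rw [mul_comm]
  exact (le_abs_self _).trans (norm_integral_le_of_norm_le_const hnorm)

end Transport

section CellPlan

variable {α : Type*} [MeasurableSpace α] {μ ν : Measure α} {C : Set α}

theorem MeasureTheory.Measure.smul_le_self_of_le_one {a : ℝ≥0∞} (ha : a ≤ 1) : a • μ ≤ μ :=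
  Measure.le_iff'.2 fun s => by
    rw [Measure.smul_apply, smul_eq_mul]
    exact mul_le_of_le_one_left zero_le ha

theorem ENNReal.inv_max_mul_le_one (a b : ℝ≥0∞) : (max a b)⁻¹ * b ≤ 1 :=
  (mul_le_mul_left (ENNReal.inv_le_inv.2 (le_max_right a b)) b).trans (ENNReal.inv_mul_le_one b)

variable (μ ν C)

noncomputable def cellPlan : Measure (α × α) :=
  (max (μ C) (ν C))⁻¹ • (μ.restrict C).prod (ν.restrict C)

theorem cellPlan_apply_univ [IsFiniteMeasure μ] [IsFiniteMeasure ν] :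
    cellPlan μ ν C univ = min (μ C) (ν C) := by
  rw [cellPlan, Measure.smul_apply, smul_eq_mul, ← univ_prod_univ, Measure.prod_prod,
    Measure.restrict_apply_univ, Measure.restrict_apply_univ, ← min_mul_max (μ C) (ν C),
    mul_left_comm]
  rcases eq_or_ne (max (μ C) (ν C)) 0 with h | h
  · have hmin : min (μ C) (ν C) = 0 := le_antisymm (h ▸ min_le_max) zero_le
    simp [h, hmin]
  · rw [ENNReal.inv_mul_cancel h (max_lt (measure_lt_top _ _) (measure_lt_top _ _)).ne, mul_one]

instance [IsFiniteMeasure μ] [IsFiniteMeasure ν] : IsFiniteMeasure (cellPlan μ ν C) :=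
  ⟨by rw [cellPlan_apply_univ]; exact (min_le_left _ _).trans_lt (measure_lt_top _ _)⟩

theorem cellPlan_map_fst [IsFiniteMeasure ν] :
    (cellPlan μ ν C).map Prod.fst = ((max (μ C) (ν C))⁻¹ * ν C) • μ.restrict C := by
  rw [cellPlan, Measure.map_smul, Measure.map_fst_prod, Measure.restrict_apply_univ, smul_smul]

theorem cellPlan_map_snd [IsFiniteMeasure μ] [IsFiniteMeasure ν] :
    (cellPlan μ ν C).map Prod.snd = ((max (μ C) (ν C))⁻¹ * μ C) • ν.restrict C := by
  rw [cellPlan, Measure.map_smul, Measure.map_snd_prod, Measure.restrict_apply_univ, smul_smul]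

theorem cellPlan_map_fst_le [IsFiniteMeasure ν] :
    (cellPlan μ ν C).map Prod.fst ≤ μ.restrict C := by
  rw [cellPlan_map_fst]
  exact Measure.smul_le_self_of_le_one (ENNReal.inv_max_mul_le_one _ _)

theorem cellPlan_map_snd_le [IsFiniteMeasure μ] [IsFiniteMeasure ν] :
    (cellPlan μ ν C).map Prod.snd ≤ ν.restrict C := by
  rw [cellPlan_map_snd, max_comm]
  exact Measure.smul_le_self_of_le_one (ENNReal.inv_max_mul_le_one _ _)

variable {μ ν C}

theorem cellPlan_map_fst_of_eq [IsFiniteMeasure μ] [IsFiniteMeasure ν] (h : μ C = ν C) :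
    (cellPlan μ ν C).map Prod.fst = μ.restrict C := by
  rw [cellPlan_map_fst, ← h, max_self]
  rcases eq_or_ne (μ C) 0 with h0 | h0
  · rw [Measure.restrict_eq_zero.2 h0, smul_zero]
  · rw [ENNReal.inv_mul_cancel h0 (measure_ne_top _ _), one_smul]

theorem cellPlan_map_snd_of_eq [IsFiniteMeasure μ] [IsFiniteMeasure ν] (h : μ C = ν C) :
    (cellPlan μ ν C).map Prod.snd = ν.restrict C := by
  rw [cellPlan_map_snd, h, max_self]
  rcases eq_or_ne (ν C) 0 with h0 | h0
  · rw [Measure.restrict_eq_zero.2 h0, smul_zero]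
  · rw [ENNReal.inv_mul_cancel h0 (measure_ne_top _ _), one_smul]

theorem ae_cellPlan_mem [SFinite ν] (hC : MeasurableSet C) : ∀ᵐ q ∂cellPlan μ ν C, q ∈ C ×ˢ C :=
  Measure.ae_smul_measure ((Measure.quasiMeasurePreserving_fst.ae (ae_restrict_mem hC)).and
    (Measure.quasiMeasurePreserving_snd.ae (ae_restrict_mem hC))) _

theorem integrable_and_integral_cellPlan_le [IsFiniteMeasure μ] [IsFiniteMeasure ν]
    {c : α → α → ℝ} (hc : Measurable (uncurry c)) (hc₀ : ∀ x y, 0 ≤ c x y)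
    (hC : MeasurableSet C) {D : ℝ} (hD : ∀ x ∈ C, ∀ y ∈ C, c x y ≤ D) :
    Integrable (fun q => c q.1 q.2) (cellPlan μ ν C) ∧
      ∫ q, c q.1 q.2 ∂cellPlan μ ν C ≤ (min (μ C) (ν C)).toReal * D := by
  rw [← cellPlan_apply_univ]
  refine integrable_and_integral_le_of_ae_le hc (fun q => hc₀ q.1 q.2) ?_
  filter_upwards [ae_cellPlan_mem hC] with q hq using hD _ hq.1 _ hq.2

end CellPlan

section Fibers

variable {α ι : Type*} {X : Set α} {f : α → ι} {s : Finset ι}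

theorem pairwiseDisjoint_sep_eq (X : Set α) (f : α → ι) (S : Set ι) :
    S.PairwiseDisjoint fun v => {x ∈ X | f x = v} :=
  fun _ _ _ _ hvw => disjoint_left.2 fun _ hv hw => hvw (hv.2.symm.trans hw.2)

theorem biUnion_sep_eq (hf : ∀ x ∈ X, f x ∈ s) : ⋃ v ∈ s, {x ∈ X | f x = v} = X :=
  Subset.antisymm (iUnion₂_subset fun _ _ => sep_subset _ _)
    fun x hx => mem_biUnion (hf x hx) ⟨hx, rfl⟩

end Fibers

section LevelPlan

variable {α ι : Type*} [MeasurableSpace α] {μ ν : Measure α} {X : Set α} {f : α → ι}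
  {s : Finset ι}

theorem sum_measure_sep_eq_measure (hcell : ∀ v, MeasurableSet {x ∈ X | f x = v})
    (hf : ∀ x ∈ X, f x ∈ s) : ∑ v ∈ s, μ {x ∈ X | f x = v} = μ X := by
  rw [← measure_biUnion_finset (pairwiseDisjoint_sep_eq X f s) fun v _ => hcell v,
    biUnion_sep_eq hf]

theorem sum_restrict_sep_le (hcell : ∀ v, MeasurableSet {x ∈ X | f x = v}) :
    ∑ v ∈ s, μ.restrict {x ∈ X | f x = v} ≤ μ :=
  Measure.le_iff.2 fun A hA => by
    simp_rw [Measure.coe_finsetSum, Finset.sum_apply, Measure.restrict_apply hA]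
    rw [← measure_biUnion_finset ((pairwiseDisjoint_sep_eq X f s).mono fun v => inter_subset_right)
      fun v _ => hA.inter (hcell v)]
    exact measure_mono (iUnion₂_subset fun _ _ => inter_subset_left)

variable (μ ν X f s)

noncomputable def levelPlan : Measure (α × α) :=
  ∑ v ∈ s, cellPlan μ ν {x ∈ X | f x = v}

theorem levelPlan_apply_univ [IsFiniteMeasure μ] [IsFiniteMeasure ν] :
    levelPlan μ ν X f s univ = ∑ v ∈ s, min (μ {x ∈ X | f x = v}) (ν {x ∈ X | f x = v}) := by
  simp only [levelPlan, Measure.coe_finsetSum, Finset.sum_apply, cellPlan_apply_univ]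

instance [IsFiniteMeasure μ] [IsFiniteMeasure ν] : IsFiniteMeasure (levelPlan μ ν X f s) :=
  ⟨by
    rw [levelPlan_apply_univ]
    exact ENNReal.sum_lt_top.2 fun v _ => (min_le_left _ _).trans_lt (measure_lt_top _ _)⟩

variable {μ ν X f s}

theorem levelPlan_map_fst_le [IsFiniteMeasure ν] (hcell : ∀ v, MeasurableSet {x ∈ X | f x = v}) :
    (levelPlan μ ν X f s).map Prod.fst ≤ μ := by
  rw [levelPlan, Measure.map_finset_sum measurable_fst.aemeasurable]
  exact (Finset.sum_le_sum fun v _ => cellPlan_map_fst_le μ ν _).trans (sum_restrict_sep_le hcell)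

theorem levelPlan_map_snd_le [IsFiniteMeasure μ] [IsFiniteMeasure ν]
    (hcell : ∀ v, MeasurableSet {x ∈ X | f x = v}) :
    (levelPlan μ ν X f s).map Prod.snd ≤ ν := by
  rw [levelPlan, Measure.map_finset_sum measurable_snd.aemeasurable]
  exact (Finset.sum_le_sum fun v _ => cellPlan_map_snd_le μ ν _).trans (sum_restrict_sep_le hcell)

theorem ae_levelPlan_sameCell [SFinite ν] (hcell : ∀ v, MeasurableSet {x ∈ X | f x = v}) :
    ∀ᵐ q ∂levelPlan μ ν X f s, q.1 ∈ X ∧ q.2 ∈ X ∧ f q.1 = f q.2 :=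
  ae_finsetSum_measure_iff.2 fun v _ => (ae_cellPlan_mem (hcell v)).mono
    fun _ ⟨h₁, h₂⟩ => ⟨h₁.1, h₂.1, h₁.2.trans h₂.2.symm⟩

theorem transportCostLE_levelPlan [IsFiniteMeasure μ] [IsFiniteMeasure ν] {c : α → α → ℝ}
    (hc : Measurable (uncurry c)) (hc₀ : ∀ x y, 0 ≤ c x y)
    (hcell : ∀ v, MeasurableSet {x ∈ X | f x = v}) {D : ι → ℝ}
    (hD : ∀ v ∈ s, ∀ x ∈ {x ∈ X | f x = v}, ∀ y ∈ {x ∈ X | f x = v}, c x y ≤ D v) :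
    TransportCostLE c ((levelPlan μ ν X f s).map Prod.fst) ((levelPlan μ ν X f s).map Prod.snd)
      (∑ v ∈ s, (min (μ {x ∈ X | f x = v}) (ν {x ∈ X | f x = v})).toReal * D v) := by
  have hcost := fun v (hv : v ∈ s) =>
    integrable_and_integral_cellPlan_le (μ := μ) (ν := ν) hc hc₀ (hcell v) (hD v hv)
  refine ⟨_, inferInstance, rfl, rfl, integrable_finsetSum_measure.2 fun v hv => (hcost v hv).1, ?_⟩
  rw [levelPlan, integral_finsetSum_measure fun v hv => (hcost v hv).1]
  exact Finset.sum_le_sum fun v hv => (hcost v hv).2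

end LevelPlan

theorem half_sum_abs_sub_eq_sum_sub_sum_min {ι : Type*} {s : Finset ι} {a b : ι → ℝ}
    (h : ∑ v ∈ s, a v = ∑ v ∈ s, b v) :
    1 / 2 * ∑ v ∈ s, |a v - b v| = ∑ v ∈ s, a v - ∑ v ∈ s, min (a v) (b v) := by
  have habs : ∀ v, |a v - b v| = a v + b v - 2 * min (a v) (b v) := fun v => by
    rw [abs_sub_comm, ← max_sub_min_eq_abs]
    linarith [min_add_max (a v) (b v)]
  simp_rw [habs, Finset.sum_sub_distrib, Finset.sum_add_distrib, ← Finset.mul_sum, h]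
  ring

section LevelTV

variable {α ι : Type*} [MeasurableSpace α] {μ ν : Measure α} {X : Set α} {f : α → ι}
  {s : Finset ι}

theorem map_fst_apply_eq_map_snd_apply {π : Measure (α × α)} {E : Set α} (hE : MeasurableSet E)
    (h : ∀ᵐ q ∂π, q.1 ∈ E ↔ q.2 ∈ E) : π.map Prod.fst E = π.map Prod.snd E := by
  rw [Measure.map_apply measurable_fst hE, Measure.map_apply measurable_snd hE]
  exact measure_congr (h.mono fun q hq => propext hq)

theorem sum_toReal_measure_sep_eq_univ [IsFiniteMeasure μ]
    (hcell : ∀ v, MeasurableSet {x ∈ X | f x = v}) (hf : ∀ x ∈ X, f x ∈ s) (hμ : μ Xᶜ = 0) :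
    ∑ v ∈ s, (μ {x ∈ X | f x = v}).toReal = (μ univ).toReal := by
  rw [← ENNReal.toReal_sum fun v _ => measure_ne_top _ _, sum_measure_sep_eq_measure hcell hf,
    measure_congr (ae_eq_univ.2 hμ)]

variable (μ ν X f s)

noncomputable def levelTV : ℝ :=
  1 / 2 * ∑ v ∈ s, |(μ {x ∈ X | f x = v}).toReal - (ν {x ∈ X | f x = v}).toReal|

variable {μ ν X f s}

theorem levelTV_add_add {ρ₁ ρ₂ : Measure α} [IsFiniteMeasure μ] [IsFiniteMeasure ν]
    [IsFiniteMeasure ρ₁] [IsFiniteMeasure ρ₂]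
    (h : ∀ v ∈ s, ρ₁ {x ∈ X | f x = v} = ρ₂ {x ∈ X | f x = v}) :
    levelTV (μ + ρ₁) (ν + ρ₂) X f s = levelTV μ ν X f s := by
  refine congrArg _ (Finset.sum_congr rfl fun v hv => ?_)
  rw [Measure.add_apply, Measure.add_apply, ENNReal.toReal_add (measure_ne_top _ _)
    (measure_ne_top _ _), ENNReal.toReal_add (measure_ne_top _ _) (measure_ne_top _ _), h v hv,
    add_sub_add_right_eq_sub]

theorem levelTV_eq_sub_sum_min [IsFiniteMeasure μ] [IsFiniteMeasure ν]
    (hcell : ∀ v, MeasurableSet {x ∈ X | f x = v}) (hf : ∀ x ∈ X, f x ∈ s) (hμ : μ Xᶜ = 0)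
    (hν : ν Xᶜ = 0) (hμν : μ univ = ν univ) :
    levelTV μ ν X f s =
      (μ univ).toReal - ∑ v ∈ s, (min (μ {x ∈ X | f x = v}) (ν {x ∈ X | f x = v})).toReal := by
  rw [levelTV, half_sum_abs_sub_eq_sum_sub_sum_min, sum_toReal_measure_sep_eq_univ hcell hf hμ]
  · simp_rw [ENNReal.toReal_min (measure_ne_top _ _) (measure_ne_top _ _)]
  · rw [sum_toReal_measure_sep_eq_univ hcell hf hμ, sum_toReal_measure_sep_eq_univ hcell hf hν, hμν]

end LevelTV

section Residual

variable {α ι : Type*} [MeasurableSpace α] {μ ν : Measure α} {π : Measure (α × α)}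
  [IsFiniteMeasure π] {X : Set α} {f : α → ι} {s : Finset ι}

theorem measure_sub_map_fst_univ_add (h : π.map Prod.fst ≤ μ) :
    (μ - π.map Prod.fst) univ + π univ = μ univ := by
  conv_rhs => rw [← Measure.sub_add_cancel_of_le h]
  rw [Measure.add_apply, Measure.map_apply measurable_fst .univ, preimage_univ]

theorem measure_sub_map_snd_univ_add (h : π.map Prod.snd ≤ ν) :
    (ν - π.map Prod.snd) univ + π univ = ν univ := by
  conv_rhs => rw [← Measure.sub_add_cancel_of_le h]
  rw [Measure.add_apply, Measure.map_apply measurable_snd .univ, preimage_univ]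

theorem measure_sub_map_fst_univ_eq (h₁ : π.map Prod.fst ≤ μ) (h₂ : π.map Prod.snd ≤ ν)
    (hμν : μ univ = ν univ) : (μ - π.map Prod.fst) univ = (ν - π.map Prod.snd) univ :=
  (ENNReal.add_left_inj (measure_ne_top π univ)).1 <| by
    rw [measure_sub_map_fst_univ_add h₁, measure_sub_map_snd_univ_add h₂, hμν]

theorem levelTV_sub_map_fst_sub_map_snd [IsFiniteMeasure μ] [IsFiniteMeasure ν]
    (h₁ : π.map Prod.fst ≤ μ) (h₂ : π.map Prod.snd ≤ ν)
    (hcell : ∀ v, MeasurableSet {x ∈ X | f x = v})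
    (hπ : ∀ v ∈ s, ∀ᵐ q ∂π, q.1 ∈ {x ∈ X | f x = v} ↔ q.2 ∈ {x ∈ X | f x = v}) :
    levelTV (μ - π.map Prod.fst) (ν - π.map Prod.snd) X f s = levelTV μ ν X f s := by
  conv_rhs => rw [← Measure.sub_add_cancel_of_le h₁, ← Measure.sub_add_cancel_of_le h₂]
  exact (levelTV_add_add fun v hv => map_fst_apply_eq_map_snd_apply (hcell v) (hπ v hv)).symm

theorem toReal_measure_sub_levelPlan_univ [IsFiniteMeasure μ] [IsFiniteMeasure ν]
    (hcell : ∀ v, MeasurableSet {x ∈ X | f x = v}) (hf : ∀ x ∈ X, f x ∈ s) (hμ : μ Xᶜ = 0)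
    (hν : ν Xᶜ = 0) (hμν : μ univ = ν univ) :
    ((μ - (levelPlan μ ν X f s).map Prod.fst) univ).toReal = levelTV μ ν X f s := by
  have h := congrArg ENNReal.toReal <|
    measure_sub_map_fst_univ_add (levelPlan_map_fst_le (μ := μ) (ν := ν) (s := s) hcell)
  rw [ENNReal.toReal_add (measure_ne_top _ _) (measure_ne_top _ _), levelPlan_apply_univ,
    ENNReal.toReal_sum fun v _ => (min_le_left _ _).trans_lt (measure_lt_top _ _) |>.ne] at h
  rw [levelTV_eq_sub_sum_min hcell hf hμ hν hμν]
  linarith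

end Residual

section CostDiam

variable {α : Type*} {c : α → α → ℝ} {X S : Set α} {x y : α}

noncomputable def costDiam (c : α → α → ℝ) (S : Set α) : ℝ :=
  sSup {r : ℝ | ∃ x ∈ S, ∃ y ∈ S, r = c x y}

theorem le_costDiam (hcX : BddAbove (uncurry c '' X ×ˢ X)) (hS : S ⊆ X) (hx : x ∈ S)
    (hy : y ∈ S) : c x y ≤ costDiam c S := by
  refine le_csSup (hcX.mono ?_) ⟨x, hx, y, hy, rfl⟩
  rintro r ⟨x, hx, y, hy, rfl⟩
  exact ⟨(x, y), ⟨hS hx, hS hy⟩, rfl⟩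

theorem costDiam_nonneg (hc₀ : ∀ x y, 0 ≤ c x y) (S : Set α) : 0 ≤ costDiam c S :=
  Real.sSup_nonneg (by rintro r ⟨x, -, y, -, rfl⟩; exact hc₀ x y)

end CostDiam

section Hierarchy

variable {α ι : Type*} [MeasurableSpace α] {c : α → α → ℝ} {X : Set α} {γ : ℕ → α → ι} {t : ℕ}
  {s : Finset ι} {δ : ℕ → ℝ}

structure IsHierarchicalClustering (X : Set α) (γ : ℕ → α → ι) (t : ℕ) (s : Finset ι) : Prop where
  mem : ∀ i < t, ∀ x ∈ X, γ i x ∈ s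
  measurableSet_cell : ∀ i < t, ∀ v, MeasurableSet {x ∈ X | γ i x = v}
  refines : ∀ i, i + 1 < t → ∀ x ∈ X, ∀ y ∈ X, γ (i + 1) x = γ (i + 1) y → γ i x = γ i y

theorem IsHierarchicalClustering.eq_of_le (hH : IsHierarchicalClustering X γ t s) {i j : ℕ}
    (hij : i ≤ j) (hj : j < t) {x y : α} (hx : x ∈ X) (hy : y ∈ X) (h : γ j x = γ j y) :
    γ i x = γ i y := by
  induction hij with
  | refl => exact h
  | step _ ih => exact ih (by omega) (hH.refines _ hj x hx y hy h)

theorem IsHierarchicalClustering.measurableSet_of_pos (hH : IsHierarchicalClustering X γ t s)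
    (ht : 0 < t) : MeasurableSet X := by
  rw [← biUnion_sep_eq (hH.mem 0 ht)]
  exact s.measurableSet_biUnion fun v _ => hH.measurableSet_cell 0 ht v

theorem transportCostLE_of_ae_mem {μ ν : Measure α} [IsFiniteMeasure μ] [IsFiniteMeasure ν]
    (hc : Measurable (uncurry c)) (hc₀ : ∀ x y, 0 ≤ c x y) (hX : MeasurableSet X)
    (hμ : μ Xᶜ = 0) (hν : ν Xᶜ = 0) (hμν : μ univ = ν univ) {D : ℝ}
    (hD : ∀ x ∈ X, ∀ y ∈ X, c x y ≤ D) : TransportCostLE c μ ν ((μ univ).toReal * D) := by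
  have hμX : μ X = μ univ := measure_congr (ae_eq_univ.2 hμ)
  have hνX : ν X = ν univ := measure_congr (ae_eq_univ.2 hν)
  have hXeq : μ X = ν X := by rw [hμX, hνX, hμν]
  obtain ⟨hint, hle⟩ := integrable_and_integral_cellPlan_le (μ := μ) (ν := ν) hc hc₀ hX hD
  refine ⟨cellPlan μ ν X, inferInstance, ?_, ?_, hint, ?_⟩
  · rw [cellPlan_map_fst_of_eq hXeq, Measure.restrict_eq_self_of_ae_mem (ae_iff.2 hμ)]
  · rw [cellPlan_map_snd_of_eq hXeq, Measure.restrict_eq_self_of_ae_mem (ae_iff.2 hν)]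
  · rwa [← hXeq, min_self, hμX] at hle

theorem transportCostLE_add_levelPlan (hc : Measurable (uncurry c)) (hc₀ : ∀ x y, 0 ≤ c x y)
    (hcX : BddAbove (uncurry c '' X ×ˢ X)) (hH : IsHierarchicalClustering X γ t s) {L : ℕ}
    (hL : L < t)
    (hR : ∀ (μ ν : Measure α) [IsFiniteMeasure μ] [IsFiniteMeasure ν], μ Xᶜ = 0 → ν Xᶜ = 0 →
      μ univ = ν univ →
      TransportCostLE c μ ν (∑ i ∈ Finset.range L, δ i * levelTV μ ν X (γ i) s +
        δ L * (μ univ).toReal))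
    {μ ν : Measure α} [IsFiniteMeasure μ] [IsFiniteMeasure ν] (hμ : μ Xᶜ = 0) (hν : ν Xᶜ = 0)
    (hμν : μ univ = ν univ) :
    TransportCostLE c μ ν (∑ i ∈ Finset.range (L + 1), δ i * levelTV μ ν X (γ i) s +
      ∑ v ∈ s, (μ {x ∈ X | γ L x = v}).toReal * costDiam c {x ∈ X | γ L x = v}) := by
  set π := levelPlan μ ν X (γ L) s
  have hcell := hH.measurableSet_cell L hL
  have h₁ : π.map Prod.fst ≤ μ := levelPlan_map_fst_le hcell
  have h₂ : π.map Prod.snd ≤ ν := levelPlan_map_snd_le hcell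
  -- `π` only moves mass inside cells of level `L`, hence inside cells of every coarser level
  have hTV : ∀ i ∈ Finset.range L,
      levelTV (μ - π.map Prod.fst) (ν - π.map Prod.snd) X (γ i) s = levelTV μ ν X (γ i) s := by
    intro i hi
    have hiL : i ≤ L := (Finset.mem_range.1 hi).le
    refine levelTV_sub_map_fst_sub_map_snd h₁ h₂ (hH.measurableSet_cell i (by omega)) fun v _ => ?_
    filter_upwards [ae_levelPlan_sameCell hcell] with q ⟨hq₁, hq₂, hq⟩
    simp only [hq₁, hq₂, true_and, hH.eq_of_le hiL hL hq₁ hq₂ hq]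
  have hres := hR (μ - π.map Prod.fst) (ν - π.map Prod.snd)
    (Measure.absolutelyContinuous_of_le Measure.sub_le hμ)
    (Measure.absolutelyContinuous_of_le Measure.sub_le hν) (measure_sub_map_fst_univ_eq h₁ h₂ hμν)
  have hsum := hres.add <| transportCostLE_levelPlan (μ := μ) (ν := ν) (s := s) hc hc₀ hcell
    fun v _ x hx y hy => le_costDiam hcX (sep_subset X _) hx hy
  rw [Measure.sub_add_cancel_of_le h₁, Measure.sub_add_cancel_of_le h₂] at hsum
  refine hsum.mono ?_
  rw [Finset.sum_range_succ, Finset.sum_congr rfl fun i hi => by rw [hTV i hi],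
    toReal_measure_sub_levelPlan_univ hcell (hH.mem L hL) hμ hν hμν]
  gcongr with v
  · exact costDiam_nonneg hc₀ _
  · exact measure_ne_top _ _
  · exact min_le_left _ _

theorem transportCostLE_sum_levelTV_add_mul_measure_univ (hc : Measurable (uncurry c))
    (hc₀ : ∀ x y, 0 ≤ c x y) (hcX : BddAbove (uncurry c '' X ×ˢ X))
    (hH : IsHierarchicalClustering X γ t s) (hX : MeasurableSet X) (hδ₀ : costDiam c X ≤ δ 0)
    (hδ : ∀ i < t, ∀ v, costDiam c {x ∈ X | γ i x = v} ≤ δ (i + 1)) :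
    ∀ L ≤ t, ∀ (μ ν : Measure α) [IsFiniteMeasure μ] [IsFiniteMeasure ν], μ Xᶜ = 0 → ν Xᶜ = 0 →
      μ univ = ν univ →
      TransportCostLE c μ ν (∑ i ∈ Finset.range L, δ i * levelTV μ ν X (γ i) s +
        δ L * (μ univ).toReal)
  | 0, _, μ, ν, _, _, hμ, hν, hμν => by
    simpa [mul_comm] using transportCostLE_of_ae_mem hc hc₀ hX hμ hν hμν
      fun x hx y hy => (le_costDiam hcX subset_rfl hx hy).trans hδ₀
  | L + 1, hL, μ, ν, _, _, hμ, hν, hμν => by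
    refine (transportCostLE_add_levelPlan hc hc₀ hcX hH hL
      (transportCostLE_sum_levelTV_add_mul_measure_univ hc hc₀ hcX hH hX hδ₀ hδ L (by omega))
      hμ hν hμν).mono (add_le_add le_rfl ?_)
    calc ∑ v ∈ s, (μ {x ∈ X | γ L x = v}).toReal * costDiam c {x ∈ X | γ L x = v}
        ≤ ∑ v ∈ s, (μ {x ∈ X | γ L x = v}).toReal * δ (L + 1) := by
          gcongr with v
          exact hδ L hL v
      _ = δ (L + 1) * (μ univ).toReal := by
          rw [← Finset.sum_mul, sum_toReal_measure_sep_eq_univ (hH.measurableSet_cell L hL)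
            (hH.mem L hL) hμ, mul_comm]

theorem transportCostLE_of_isHierarchicalClustering (hc : Measurable (uncurry c))
    (hc₀ : ∀ x y, 0 ≤ c x y) (hcX : BddAbove (uncurry c '' X ×ˢ X))
    (hH : IsHierarchicalClustering X γ t s) (ht : 0 < t) (hδ₀ : costDiam c X ≤ δ 0)
    (hδ : ∀ i < t, ∀ v, costDiam c {x ∈ X | γ i x = v} ≤ δ (i + 1))
    {μ ν : Measure α} [IsFiniteMeasure μ] [IsFiniteMeasure ν] (hμ : μ Xᶜ = 0) (hν : ν Xᶜ = 0)
    (hμν : μ univ = ν univ) :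
    TransportCostLE c μ ν (∑ i ∈ Finset.range t, δ i * levelTV μ ν X (γ i) s +
      ∑ v ∈ s, (μ {x ∈ X | γ (t - 1) x = v}).toReal * costDiam c {x ∈ X | γ (t - 1) x = v}) := by
  obtain ⟨L, rfl⟩ : ∃ L, t = L + 1 := ⟨t - 1, by omega⟩
  exact transportCostLE_add_levelPlan hc hc₀ hcX hH (by omega)
    (transportCostLE_sum_levelTV_add_mul_measure_univ hc hc₀ hcX hH
      (hH.measurableSet_of_pos ht) hδ₀ hδ L (by omega)) hμ hν hμν

end Hierarchy

theorem lpNormalizedDist_nonneg (d : ℕ) (p : ℝ) (x y : Fin d → ℝ) :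
    0 ≤ lpNormalizedDist d p x y := by
  unfold lpNormalizedDist
  positivity

theorem continuous_lpNormalizedDist (d : ℕ) {p : ℝ} (hp : 0 ≤ p) :
    Continuous (uncurry (lpNormalizedDist d p)) := by
  unfold lpNormalizedDist
  have := Real.continuous_rpow_const hp
  have := Real.continuous_rpow_const (one_div_nonneg.2 hp)
  fun_prop

theorem emd_le_hierarchical_clustering_bound_continuous_general
    (d : ℕ) (p : ℝ) (hp : 1 ≤ p)
    (X : Set (Fin d → ℝ)) (hX : Bornology.IsBounded X)
    (μ ν : Measure (Fin d → ℝ))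
    [IsProbabilityMeasure μ] [IsProbabilityMeasure ν]
    (hμX : μ X = 1) (hνX : ν X = 1)
    (t : ℕ) (ht : 1 ≤ t) (k : ℕ)
    (γ : ℕ → (Fin d → ℝ) → ℕ)
    (hk : ∀ i < t, ∀ x ∈ X, γ i x < k)
    (hmeas : ∀ i < t, ∀ v : ℕ, MeasurableSet {x ∈ X | γ i x = v})
    (hrefine : ∀ i, i + 1 < t → ∀ x ∈ X, ∀ y ∈ X,
      γ (i + 1) x = γ (i + 1) y → γ i x = γ i y)
    (δ : ℕ → ℝ)
    (hδ0 : δ 0 = lpNormalizedDiam d p X)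
    (hdiam : ∀ i < t, ∀ v : ℕ, lpNormalizedDiam d p {x ∈ X | γ i x = v} ≤ δ (i + 1)) :
    sInf {c : ℝ | ∃ π : Measure ((Fin d → ℝ) × (Fin d → ℝ)),
        IsProbabilityMeasure π ∧
        π.map Prod.fst = μ ∧ π.map Prod.snd = ν ∧
        c = ∫ q, lpNormalizedDist d p q.1 q.2 ∂π} ≤
      (∑ i ∈ Finset.range t, δ i *
          ((1 / 2) * ∑ v ∈ Finset.range k,
            |(μ {x ∈ X | γ i x = v}).toReal - (ν {x ∈ X | γ i x = v}).toReal|)) +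
        ∑ v ∈ Finset.range k,
          (μ {x ∈ X | γ (t - 1) x = v}).toReal *
            lpNormalizedDiam d p {x ∈ X | γ (t - 1) x = v} := by
  have hH : IsHierarchicalClustering X γ t (Finset.range k) :=
    ⟨fun i hi x hx => Finset.mem_range.2 (hk i hi x hx), hmeas, hrefine⟩
  have hXm := hH.measurableSet_of_pos ht
  have hcont := continuous_lpNormalizedDist d (zero_le_one.trans hp)
  have hbdd : BddAbove (uncurry (lpNormalizedDist d p) '' X ×ˢ X) :=
    ((hX.isCompact_closure.prod hX.isCompact_closure).bddAbove_image hcont.continuousOn).mono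
      (image_mono (prod_mono subset_closure subset_closure))
  exact earthMoverDist_le_of_transportCostLE (lpNormalizedDist_nonneg d p) <|
    transportCostLE_of_isHierarchicalClustering hcont.measurable (lpNormalizedDist_nonneg d p)
      hbdd hH ht hδ0.ge hdiam ((prob_compl_eq_zero_iff hXm).2 hμX)
      ((prob_compl_eq_zero_iff hXm).2 hνX) (by rw [measure_univ, measure_univ])

/-- Let `X ⊂ ℝ^d` be bounded, equipped with the normalized `ℓ_p`
metric, `p ≥ 1`.  Let `μ, ν` be Borel probability measures on `X`, and let
`γ 0, …, γ (t-1)` be a hierarchical clustering of `X` into at most `k` measurable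
cells per level (cell of `x` at level `i` is `{y ∈ X | γ i y = γ i x}`), each level
refining the previous, with diameter bounds `δ (i+1)` and `δ 0 = diam X`.  Then
`EMD(μ,ν) ≤ Σ_{i=0}^{t-1} δ i · d_TV(μ_{γ i}, ν_{γ i}) + Σ_v μ(cell_{t-1} v)·diam(cell_{t-1} v)`. -/
theorem emd_le_hierarchical_clustering_bound_continuous
    (d : ℕ) (hd : 1 ≤ d) (p : ℝ) (hp : 1 ≤ p)
    (X : Set (Fin d → ℝ)) (hX : Bornology.IsBounded X)
    (μ ν : Measure (Fin d → ℝ))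
    [IsProbabilityMeasure μ] [IsProbabilityMeasure ν]
    (hμX : μ X = 1) (hνX : ν X = 1)
    (t : ℕ) (ht : 1 ≤ t) (k : ℕ)
    (γ : ℕ → (Fin d → ℝ) → ℕ)
    (hk : ∀ i < t, ∀ x ∈ X, γ i x < k)
    (hmeas : ∀ i < t, ∀ v : ℕ, MeasurableSet {x ∈ X | γ i x = v})
    (hrefine : ∀ i, i + 1 < t → ∀ x ∈ X, ∀ y ∈ X,
      γ (i + 1) x = γ (i + 1) y → γ i x = γ i y)
    (δ : ℕ → ℝ)
    (hδ0 : δ 0 = lpNormalizedDiam d p X)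
    (hdiam : ∀ i < t, ∀ v : ℕ, lpNormalizedDiam d p {x ∈ X | γ i x = v} ≤ δ (i + 1)) :
    sInf {c : ℝ | ∃ π : Measure ((Fin d → ℝ) × (Fin d → ℝ)),
        IsProbabilityMeasure π ∧
        π.map Prod.fst = μ ∧ π.map Prod.snd = ν ∧
        c = ∫ q, lpNormalizedDist d p q.1 q.2 ∂π} ≤
      (∑ i ∈ Finset.range t, δ i *
          ((1 / 2) * ∑ v ∈ Finset.range k,
            |(μ {x ∈ X | γ i x = v}).toReal - (ν {x ∈ X | γ i x = v}).toReal|)) +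
        ∑ v ∈ Finset.range k,
          (μ {x ∈ X | γ (t - 1) x = v}).toReal *
            lpNormalizedDiam d p {x ∈ X | γ (t - 1) x = v} :=
  emd_le_hierarchical_clustering_bound_continuous_general d p hp X hX μ ν hμX hνX t ht k γ hk hmeas
    hrefine δ hδ0 hdiam
end

section
/- Let n ∈ ℕ, let m > 0 be a real number, and let μ be a probability vector on {0,…,n−1}. Let T_0, …, T_{n−1} be mutually independent random variables with T_i ∼ Poisson(m·μ_i), and let Φ be a random n×n real matrix, independent of (T_0,…,T_{n−1}), that is symmetric, has all entries in {0,1}, and has Φ_{ii} = 1 for every i. Define the test statistic Y = (1/m²)·(Σ_{i,j} T_i T_j Φ_{ij} − Σ_i T_i). Then E[Y] = μᵀ · E[Φ] · μ, i.e. E[Y] = Σ_{i,j} μ_i μ_j E[Φ_{ij}]. -/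
/-!
The factorial moments of a Poisson variable are `E[T (T-1) ⋯ (T-k+1)] = r ^ k`, so
`E[T_i T_j] = m² μ_i μ_j + [i = j] m μ_i` for independent `T_i ∼ Poisson(m μ_i)`.
Since `Φ` is independent of `T`, `E[T_i T_j Φ_ij] = E[T_i T_j] E[Φ_ij]`, and because `Φ_ii = 1`
the diagonal excess `Σ_i m μ_i` is exactly what subtracting `Σ_i T_i` removes.
-/

open MeasureTheory ProbabilityTheory Real Finset
open scoped NNReal Nat

lemma Real.hasSum_descFactorial_mul_pow_div_factorial (k : ℕ) (x : ℝ) :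
    HasSum (fun n : ℕ => (n.descFactorial k : ℝ) * x ^ n / n !) (x ^ k * exp x) := by
  rw [← hasSum_nat_add_iff' k]
  have hlow : ∑ i ∈ range k, (i.descFactorial k : ℝ) * x ^ i / i ! = 0 :=
    sum_eq_zero fun i hi => by
      simp [Nat.descFactorial_eq_zero_iff_lt.mpr (mem_range.mp hi)]
  have hshift : (fun n => ((n + k).descFactorial k : ℝ) * x ^ (n + k) / (n + k) !)
      = fun n => x ^ k * (x ^ n / n !) := by
    funext n
    have hfac : ((n + k) ! : ℝ) = n ! * (n + k).descFactorial k := by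
      rw [← Nat.factorial_mul_descFactorial (Nat.le_add_left k n), Nat.add_sub_cancel]
      push_cast; rfl
    have hpos : ((n + k).descFactorial k : ℝ) ≠ 0 := by
      exact_mod_cast (Nat.descFactorial_pos.mpr (Nat.le_add_left k n)).ne'
    rw [hfac, pow_add]
    field_simp
  rw [hlow, sub_zero, hshift, exp_eq_exp_ℝ]
  exact (NormedSpace.expSeries_div_hasSum_exp x).mul_left (x ^ k)

lemma Nat.cast_sq_eq_descFactorial_two_add (n : ℕ) :
    (n : ℝ) ^ 2 = n.descFactorial 2 + n := by
  rcases n with _ | n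
  · simp
  · simp [Nat.descFactorial]; ring

namespace ProbabilityTheory

lemma hasSum_descFactorial_poissonMeasure (r : ℝ≥0) (k : ℕ) :
    HasSum (fun n : ℕ => exp (-r) * r ^ n / n ! * (n.descFactorial k : ℝ)) ((r : ℝ) ^ k) := by
  convert! (Real.hasSum_descFactorial_mul_pow_div_factorial k r).mul_left (exp (-r)) using 1
  · funext n; ring
  · rw [mul_left_comm, ← exp_add, neg_add_cancel, exp_zero, mul_one]

lemma integrable_descFactorial_poissonMeasure (r : ℝ≥0) (k : ℕ) :
    Integrable (fun n : ℕ => (n.descFactorial k : ℝ)) Po(r) := by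
  rw [integrable_poissonMeasure_iff]
  simpa using (hasSum_descFactorial_poissonMeasure r k).summable

lemma integral_descFactorial_poissonMeasure (r : ℝ≥0) (k : ℕ) :
    ∫ n, (n.descFactorial k : ℝ) ∂Po(r) = (r : ℝ) ^ k :=
  (hasSum_integral_poissonMeasure (integrable_descFactorial_poissonMeasure r k)).unique
    (hasSum_descFactorial_poissonMeasure r k)

lemma integrable_natCast_poissonMeasure (r : ℝ≥0) :
    Integrable (fun n : ℕ => (n : ℝ)) Po(r) := by
  simpa using integrable_descFactorial_poissonMeasure r 1

lemma integral_natCast_poissonMeasure (r : ℝ≥0) : ∫ n, (n : ℝ) ∂Po(r) = r := by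
  simpa using integral_descFactorial_poissonMeasure r 1

lemma integrable_natCast_sq_poissonMeasure (r : ℝ≥0) :
    Integrable (fun n : ℕ => (n : ℝ) ^ 2) Po(r) := by
  simp only [Nat.cast_sq_eq_descFactorial_two_add]
  exact (integrable_descFactorial_poissonMeasure r 2).add (integrable_natCast_poissonMeasure r)

lemma integral_natCast_sq_poissonMeasure (r : ℝ≥0) :
    ∫ n, (n : ℝ) ^ 2 ∂Po(r) = r ^ 2 + r := by
  simp only [Nat.cast_sq_eq_descFactorial_two_add]
  rw [integral_add (integrable_descFactorial_poissonMeasure r 2)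
    (integrable_natCast_poissonMeasure r), integral_descFactorial_poissonMeasure,
    integral_natCast_poissonMeasure]

section RandomVariable

variable {Ω : Type*} [MeasurableSpace Ω] {P : Measure Ω}

lemma HasLaw.integrable_comp_iff {𝓧 E : Type*} [MeasurableSpace 𝓧] [NormedAddCommGroup E]
    {X : Ω → 𝓧} {μ : Measure 𝓧} (hX : HasLaw X μ P) {f : 𝓧 → E}
    (hf : AEStronglyMeasurable f μ) : Integrable (fun ω => f (X ω)) P ↔ Integrable f μ := by
  rw [← hX.map_eq] at hf ⊢
  exact (integrable_map_measure hf hX.aemeasurable).symm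

lemma hasLaw_poissonMeasure_of_measure_eq {X : Ω → ℕ} (hX : Measurable X) {r : ℝ≥0}
    (h : ∀ k, P {ω | X ω = k} = ENNReal.ofReal (exp (-r) * r ^ k / k !)) :
    HasLaw X Po(r) P where
  aemeasurable := hX.aemeasurable
  map_eq := Measure.ext_of_singleton fun k => by
    rw [Measure.map_apply hX (measurableSet_singleton k), poissonMeasure_singleton]
    exact h k

section Poisson

variable {X : Ω → ℕ} {r : ℝ≥0}

lemma HasLaw.integrable_natCast_of_poisson (hX : HasLaw X Po(r) P) :
    Integrable (fun ω => (X ω : ℝ)) P :=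
  (hX.integrable_comp_iff .of_discrete).mpr (integrable_natCast_poissonMeasure r)

lemma HasLaw.integral_natCast_of_poisson (hX : HasLaw X Po(r) P) :
    ∫ ω, (X ω : ℝ) ∂P = r :=
  (hX.integral_comp .of_discrete).trans (integral_natCast_poissonMeasure r)

lemma HasLaw.integrable_natCast_sq_of_poisson (hX : HasLaw X Po(r) P) :
    Integrable (fun ω => (X ω : ℝ) ^ 2) P :=
  (hX.integrable_comp_iff .of_discrete).mpr (integrable_natCast_sq_poissonMeasure r)

lemma HasLaw.integral_natCast_sq_of_poisson (hX : HasLaw X Po(r) P) :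
    ∫ ω, (X ω : ℝ) ^ 2 ∂P = r ^ 2 + r :=
  (hX.integral_comp .of_discrete).trans (integral_natCast_sq_poissonMeasure r)

end Poisson

variable {ι : Type*} {T : ι → Ω → ℕ} {r : ι → ℝ≥0}

lemma integrable_natCast_mul_of_iIndepFun_poisson [IsFiniteMeasure P] (hT : iIndepFun T P)
    (hlaw : ∀ i, HasLaw (T i) Po(r i) P) (i j : ι) :
    Integrable (fun ω => (T i ω : ℝ) * T j ω) P := by
  by_cases hij : i = j
  · subst hij
    simpa [← sq] using (hlaw i).integrable_natCast_sq_of_poisson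
  · exact ((hT.indepFun hij).comp measurable_from_nat measurable_from_nat).integrable_mul
      (hlaw i).integrable_natCast_of_poisson (hlaw j).integrable_natCast_of_poisson

lemma integral_natCast_mul_of_iIndepFun_poisson [DecidableEq ι] (hT : iIndepFun T P)
    (hlaw : ∀ i, HasLaw (T i) Po(r i) P) (i j : ι) :
    ∫ ω, (T i ω : ℝ) * T j ω ∂P = r i * r j + if i = j then (r i : ℝ) else 0 := by
  by_cases hij : i = j
  · subst hij
    simpa [← sq] using (hlaw i).integral_natCast_sq_of_poisson
  · have hind : IndepFun (fun ω => (T i ω : ℝ)) (fun ω => (T j ω : ℝ)) P :=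
      (hT.indepFun hij).comp measurable_from_nat measurable_from_nat
    rw [hind.integral_fun_mul_eq_mul_integral (hlaw i).integrable_natCast_of_poisson.1
      (hlaw j).integrable_natCast_of_poisson.1,
      (hlaw i).integral_natCast_of_poisson, (hlaw j).integral_natCast_of_poisson, if_neg hij,
      add_zero]

end RandomVariable

end ProbabilityTheory

namespace ProbabilityTheory.IndepFun

variable {Ω ι : Type*} [MeasurableSpace Ω] {P : Measure Ω}
  {X : Ω → ι → ℝ} {A : Ω → ι → ι → ℝ}

lemma entry_mul_entry (hXA : IndepFun X A P) (i j : ι) :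
    IndepFun (fun ω => X ω i * X ω j) (fun ω => A ω i j) P :=
  hXA.comp (show Measurable fun x : ι → ℝ => x i * x j by fun_prop)
    (show Measurable fun a : ι → ι → ℝ => a i j by fun_prop)

lemma integrable_entry_mul_entry_mul [IsFiniteMeasure P] (hXA : IndepFun X A P)
    (hX : ∀ i j, Integrable (fun ω => X ω i * X ω j) P)
    (hA : ∀ i j, Integrable (fun ω => A ω i j) P) (i j : ι) :
    Integrable (fun ω => X ω i * X ω j * A ω i j) P :=
  (hXA.entry_mul_entry i j).integrable_mul (hX i j) (hA i j)

variable [IsFiniteMeasure P] [Fintype ι]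

lemma integrable_quadraticForm (hXA : IndepFun X A P)
    (hX : ∀ i j, Integrable (fun ω => X ω i * X ω j) P)
    (hA : ∀ i j, Integrable (fun ω => A ω i j) P) :
    Integrable (fun ω => ∑ i, ∑ j, X ω i * X ω j * A ω i j) P :=
  integrable_finsetSum _ fun i _ => integrable_finsetSum _ fun j _ =>
    hXA.integrable_entry_mul_entry_mul hX hA i j

lemma integral_quadraticForm (hXA : IndepFun X A P)
    (hX : ∀ i j, Integrable (fun ω => X ω i * X ω j) P)
    (hA : ∀ i j, Integrable (fun ω => A ω i j) P) :
    ∫ ω, ∑ i, ∑ j, X ω i * X ω j * A ω i j ∂P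
      = ∑ i, ∑ j, (∫ ω, X ω i * X ω j ∂P) * ∫ ω, A ω i j ∂P := by
  rw [integral_finsetSum _ fun i _ => integrable_finsetSum _ fun j _ =>
    hXA.integrable_entry_mul_entry_mul hX hA i j]
  refine Finset.sum_congr rfl fun i _ => ?_
  rw [integral_finsetSum _ fun j _ => hXA.integrable_entry_mul_entry_mul hX hA i j]
  exact Finset.sum_congr rfl fun j _ =>
    (hXA.entry_mul_entry i j).integral_fun_mul_eq_mul_integral (hX i j).1 (hA i j).1

end ProbabilityTheory.IndepFun

theorem expectation_test_statistic_general
    {Ω : Type*} [MeasurableSpace Ω] (P : Measure Ω) [IsProbabilityMeasure P]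
    (n : ℕ) (m : ℝ) (hm : 0 < m)
    (μ : Fin n → ℝ) (hμ0 : ∀ i, 0 ≤ μ i)
    (T : Fin n → Ω → ℕ) (hTmeas : ∀ i, Measurable (T i))
    (hTindep : iIndepFun T P)
    (hTpois : ∀ i k, P {ω | T i ω = k} =
      ENNReal.ofReal (Real.exp (-(m * μ i)) * (m * μ i) ^ k / (Nat.factorial k)))
    (Φ : Ω → Fin n → Fin n → ℝ) (hΦmeas : Measurable Φ)
    (hIndep : IndepFun (fun ω => fun i => T i ω) Φ P)
    (hΦ01 : ∀ ω i j, Φ ω i j = 0 ∨ Φ ω i j = 1)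
    (hΦdiag : ∀ ω i, Φ ω i i = 1) :
    ∫ ω, (1 / m ^ 2) *
        ((∑ i, ∑ j, (T i ω : ℝ) * (T j ω : ℝ) * Φ ω i j) - ∑ i, (T i ω : ℝ)) ∂P
      = ∑ i, ∑ j, μ i * μ j * ∫ ω, Φ ω i j ∂P := by
  set r : Fin n → ℝ≥0 := fun i => ⟨m * μ i, mul_nonneg hm.le (hμ0 i)⟩
  have hr : ∀ i, (r i : ℝ) = m * μ i := fun _ => rfl
  have hlaw : ∀ i, HasLaw (T i) Po(r i) P := fun i =>
    hasLaw_poissonMeasure_of_measure_eq (hTmeas i) (hTpois i)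
  have hΦint : ∀ i j, Integrable (fun ω => Φ ω i j) P := fun i j =>
    (integrable_const (1 : ℝ)).mono'
      (by fun_prop : Measurable fun ω => Φ ω i j).aestronglyMeasurable
      (ae_of_all _ fun ω => by rcases hΦ01 ω i j with h | h <;> simp [h])
  have hXΦ : IndepFun (fun ω i => (T i ω : ℝ)) Φ P :=
    hIndep.comp (show Measurable fun (v : Fin n → ℕ) i => (v i : ℝ) by fun_prop) measurable_id
  have hTT := integrable_natCast_mul_of_iIndepFun_poisson hTindep hlaw
  have hT : Integrable (fun ω => ∑ i, (T i ω : ℝ)) P :=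
    integrable_finsetSum _ fun i _ => (hlaw i).integrable_natCast_of_poisson
  rw [integral_const_mul, integral_sub (hXΦ.integrable_quadraticForm hTT hΦint) hT,
    hXΦ.integral_quadraticForm hTT hΦint,
    integral_finsetSum _ fun i _ => (hlaw i).integrable_natCast_of_poisson]
  simp only [integral_natCast_mul_of_iIndepFun_poisson hTindep hlaw,
    (hlaw _).integral_natCast_of_poisson, add_mul, ite_mul, zero_mul, Finset.sum_add_distrib,
    Finset.sum_ite_eq, Finset.mem_univ, if_true, hΦdiag, integral_const, probReal_univ,
    smul_eq_mul, mul_one, hr]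
  rw [add_sub_cancel_right, Finset.mul_sum]
  refine Finset.sum_congr rfl fun i _ => ?_
  rw [Finset.mul_sum]
  refine Finset.sum_congr rfl fun j _ => ?_
  field_simp

/-- Let `μ` be a probability vector on `{0,…,n−1}`, let
`T_0, …, T_{n−1}` be mutually independent with `T_i ∼ Poisson(m·μ_i)`, and let `Φ`
be a random symmetric `{0,1}`-valued `n×n` matrix with unit diagonal, independent
of `(T_0,…,T_{n−1})`.  For the test statistic
`Y = (1/m²)·(Σ_{i,j} T_i T_j Φ_{ij} − Σ_i T_i)` we have `E[Y] = μᵀ·E[Φ]·μ`. -/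
theorem expectation_test_statistic
    {Ω : Type*} [MeasurableSpace Ω] (P : Measure Ω) [IsProbabilityMeasure P]
    (n : ℕ) (m : ℝ) (hm : 0 < m)
    (μ : Fin n → ℝ) (hμ0 : ∀ i, 0 ≤ μ i) (hμ1 : ∑ i, μ i = 1)
    (T : Fin n → Ω → ℕ) (hTmeas : ∀ i, Measurable (T i))
    (hTindep : iIndepFun T P)
    (hTpois : ∀ i k, P {ω | T i ω = k} =
      ENNReal.ofReal (Real.exp (-(m * μ i)) * (m * μ i) ^ k / (Nat.factorial k)))
    (Φ : Ω → Fin n → Fin n → ℝ) (hΦmeas : Measurable Φ)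
    (hIndep : IndepFun (fun ω => fun i => T i ω) Φ P)
    (hΦsymm : ∀ ω i j, Φ ω i j = Φ ω j i)
    (hΦ01 : ∀ ω i j, Φ ω i j = 0 ∨ Φ ω i j = 1)
    (hΦdiag : ∀ ω i, Φ ω i i = 1) :
    ∫ ω, (1 / m ^ 2) *
        ((∑ i, ∑ j, (T i ω : ℝ) * (T j ω : ℝ) * Φ ω i j) - ∑ i, (T i ω : ℝ)) ∂P
      = ∑ i, ∑ j, μ i * μ j * ∫ ω, Φ ω i j ∂P :=
  expectation_test_statistic_general P n m hm μ hμ0 T hTmeas hTindep hTpois Φ hΦmeas hIndep hΦ01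
    hΦdiag
end

section
/- For every n ∈ ℕ with n ≥ 1 and every ρ ∈ (0,1], setting η = 1 − ρ, every eigenvalue of the n×n real symmetric matrix A(n,η) with entries A(n,η)_{ij} = η^{|i−j|} is strictly greater than ρ/2; equivalently, A(n,η) − (ρ/2)·I is positive definite. -/
/-!
Let `Q_k = pathForm η x k` be the quadratic form of `A(k, η)` evaluated at the first `k`
coordinates of `x`, and `S_k = pathTail η x k = ∑_{i<k} η^(k-1-i) x_i`. Bordering the matrix by
one row and column gives `Q_{k+1} = Q_k + 2 η S_k x_k + x_k²` and `S_{k+1} = η S_k + x_k`, and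
induction on `k` shows
`(1 + η) Q_k ≥ (1 - η) ∑_{i<k} x_i² + η (1 + η) S_k²`, the defect growing at each step by
`η (1 - η) ((1 + η) S_k + x_k)² ≥ 0`. Hence `A(n, η) - c I` is positive definite whenever
`c (1 + η) < 1 - η`, and `c = ρ / 2` qualifies because `(ρ / 2) (2 - ρ) < ρ`.
-/

open Finset Matrix Module.End

section PathForm

variable {R : Type*} [CommRing R]

def pathForm (η : R) (x : ℕ → R) (k : ℕ) : R :=
  ∑ i ∈ range k, ∑ j ∈ range k, η ^ ((i : ℤ) - j).natAbs * x i * x j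

def pathTail (η : R) (x : ℕ → R) (k : ℕ) : R :=
  ∑ i ∈ range k, η ^ (k - 1 - i) * x i

section Recurrences

variable (η : R) (x : ℕ → R) (k : ℕ)

theorem pathTail_succ : pathTail η x (k + 1) = η * pathTail η x k + x k := by
  simp only [pathTail, sum_range_succ, Nat.add_sub_cancel, Nat.sub_self, pow_zero, one_mul,
    mul_sum]
  refine congrArg (· + x k) (sum_congr rfl fun i hi => ?_)
  rw [← mul_assoc, ← pow_succ']
  congr 2
  have := mem_range.mp hi
  omega

theorem pathForm_succ :
    pathForm η x (k + 1) = pathForm η x k + 2 * η * pathTail η x k * x k + x k * x k := by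
  have natAbs_eq (i : ℕ) (hi : i ∈ range k) :
      ((i : ℤ) - k).natAbs = k - 1 - i + 1 ∧ ((k : ℤ) - i).natAbs = k - 1 - i + 1 := by
    have := mem_range.mp hi
    omega
  have row : ∑ i ∈ range k, η ^ ((i : ℤ) - k).natAbs * x i * x k = η * pathTail η x k * x k := by
    rw [pathTail, mul_sum, sum_mul]
    refine sum_congr rfl fun i hi => ?_
    rw [(natAbs_eq i hi).1, pow_succ']
    ring
  have col : ∑ j ∈ range k, η ^ ((k : ℤ) - j).natAbs * x k * x j = η * pathTail η x k * x k := by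
    rw [pathTail, mul_sum, sum_mul]
    refine sum_congr rfl fun j hj => ?_
    rw [(natAbs_eq j hj).2, pow_succ']
    ring
  simp only [pathForm, sum_range_succ, sum_add_distrib, row, col, sub_self, Int.natAbs_zero,
    pow_zero, one_mul]
  ring

end Recurrences

section Ordered

variable [LinearOrder R] [IsStrictOrderedRing R] {η : R}

theorem sum_sq_add_pathTail_sq_le_pathForm (h0 : 0 ≤ η) (h1 : η ≤ 1) (x : ℕ → R) (k : ℕ) :
    (1 - η) * ∑ i ∈ range k, x i ^ 2 + (1 + η) * η * pathTail η x k ^ 2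
      ≤ (1 + η) * pathForm η x k := by
  induction k with
  | zero => simp [pathForm, pathTail]
  | succ k ih =>
    rw [pathForm_succ, pathTail_succ, sum_range_succ]
    nlinarith [mul_nonneg (mul_nonneg h0 (sub_nonneg.mpr h1))
      (sq_nonneg ((1 + η) * pathTail η x k + x k))]

theorem sum_sq_le_pathForm (h0 : 0 ≤ η) (h1 : η ≤ 1) (x : ℕ → R) (k : ℕ) :
    (1 - η) * ∑ i ∈ range k, x i ^ 2 ≤ (1 + η) * pathForm η x k :=
  (le_add_of_nonneg_right (mul_nonneg (mul_nonneg (by linarith) h0) (sq_nonneg _))).trans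
    (sum_sq_add_pathTail_sq_le_pathForm h0 h1 x k)

end Ordered

end PathForm

def pathMatrix (η : ℝ) (n : ℕ) : Matrix (Fin n) (Fin n) ℝ :=
  of fun i j => η ^ ((i : ℤ) - j).natAbs

theorem pathMatrix_isHermitian (η : ℝ) (n : ℕ) : (pathMatrix η n).IsHermitian := by
  ext i j
  simp only [conjTranspose_apply, pathMatrix, of_apply, star_trivial]
  rw [← Int.natAbs_neg, neg_sub]

theorem dotProduct_pathMatrix_mulVec (η : ℝ) {n : ℕ} (v : Fin n → ℝ) :
    v ⬝ᵥ (pathMatrix η n *ᵥ v) = pathForm η (Function.extend Fin.val v 0) n := by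
  have hv (i : Fin n) : Function.extend Fin.val v 0 i = v i := Fin.val_injective.extend_apply v 0 i
  rw [dot_mulVec_eq_sum_sum, pathForm, ← Fin.sum_univ_eq_sum_range, sum_comm]
  refine sum_congr rfl fun i _ => ?_
  rw [← Fin.sum_univ_eq_sum_range]
  refine sum_congr rfl fun j _ => ?_
  rw [hv, hv, pathMatrix, of_apply]
  ring

theorem posDef_pathMatrix_sub_smul_one {η c : ℝ} (h0 : 0 ≤ η) (h1 : η ≤ 1)
    (hc : c * (1 + η) < 1 - η) (n : ℕ) : (pathMatrix η n - c • 1).PosDef := by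
  refine posDef_iff_dotProduct_mulVec.mpr
    ⟨(pathMatrix_isHermitian η n).sub (isHermitian_one.smul (IsSelfAdjoint.all c)), fun v hv => ?_⟩
  have hform := sum_sq_le_pathForm h0 h1 (Function.extend Fin.val v 0) n
  have hsq : ∑ i ∈ range n, Function.extend Fin.val v 0 i ^ 2 = v ⬝ᵥ v := by
    rw [← Fin.sum_univ_eq_sum_range, dotProduct]
    exact sum_congr rfl fun i _ => by rw [Fin.val_injective.extend_apply, sq]
  rw [hsq, ← dotProduct_pathMatrix_mulVec] at hform
  have hvv : 0 < v ⬝ᵥ v := by simpa using dotProduct_star_self_pos_iff.mpr hv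
  rw [star_trivial, sub_mulVec, smul_mulVec, one_mulVec, dotProduct_sub, dotProduct_smul,
    smul_eq_mul]
  nlinarith [mul_pos (sub_pos.mpr hc) hvv]

theorem Matrix.PosDef.lt_of_hasEigenvalue {ι : Type*} [Fintype ι] [DecidableEq ι]
    {A : Matrix ι ι ℝ} {c t : ℝ} (hA : (A - c • 1).PosDef) (ht : HasEigenvalue (toLin' A) t) :
    c < t := by
  obtain ⟨v, hv⟩ := ht.exists_hasEigenvector
  have hAv : A *ᵥ v = t • v := by simpa using hv.apply_eq_smul
  have hpos := hA.dotProduct_mulVec_pos hv.2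
  rw [sub_mulVec, hAv, smul_mulVec, one_mulVec, ← sub_smul, dotProduct_smul, smul_eq_mul] at hpos
  exact sub_pos.mp (pos_of_mul_pos_left hpos (dotProduct_star_self_pos_iff.mpr hv.2).le)

theorem min_eigenvalue_path_matrix_general
    (n : ℕ) (ρ η : ℝ) (hρ0 : 0 < ρ) (hρ1 : ρ ≤ 1) (hη : η = 1 - ρ)
    (A : Matrix (Fin n) (Fin n) ℝ)
    (hA : ∀ i j, A i j = η ^ (((i : ℤ) - (j : ℤ)).natAbs)) :
    (∀ t : ℝ, Module.End.HasEigenvalue (Matrix.toLin' A) t → ρ / 2 < t) ∧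
      (A - (ρ / 2) • (1 : Matrix (Fin n) (Fin n) ℝ)).PosDef := by
  obtain rfl : A = pathMatrix η n := Matrix.ext hA
  subst hη
  have hpos : (pathMatrix (1 - ρ) n - (ρ / 2) • 1).PosDef :=
    posDef_pathMatrix_sub_smul_one (by linarith) (by linarith) (by nlinarith) n
  exact ⟨fun t ht => hpos.lt_of_hasEigenvalue ht, hpos⟩

/-- For every `n ≥ 1` and `ρ ∈ (0,1]`, with `η = 1 − ρ`, every
eigenvalue of the `n×n` symmetric Toeplitz matrix `A(n,η)` with entries
`A_{ij} = η^{|i−j|}` is strictly greater than `ρ/2`; equivalently,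
`A(n,η) − (ρ/2)·I` is positive definite. -/
theorem min_eigenvalue_path_matrix
    (n : ℕ) (hn : 1 ≤ n) (ρ η : ℝ) (hρ0 : 0 < ρ) (hρ1 : ρ ≤ 1) (hη : η = 1 - ρ)
    (A : Matrix (Fin n) (Fin n) ℝ)
    (hA : ∀ i j, A i j = η ^ (((i : ℤ) - (j : ℤ)).natAbs)) :
    (∀ t : ℝ, Module.End.HasEigenvalue (Matrix.toLin' A) t → ρ / 2 < t) ∧
      (A - (ρ / 2) • (1 : Matrix (Fin n) (Fin n) ℝ)).PosDef :=
  min_eigenvalue_path_matrix_general n ρ η hρ0 hρ1 hη A hA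
end

section
/- For every δ ∈ (0,1) and every C > 0 there exists N ∈ ℕ such that for all n ≥ N and all ρ ∈ (0,1] with ρ ≥ C·n^{−δ}, setting η = 1 − ρ, every eigenvalue of the n×n real symmetric circulant matrix M with entries M_{ij} = η^{min(|i−j|, n−|i−j|)} (rows and columns indexed by {0,…,n−1}) is strictly greater than ρ/3. -/
/-!
Let `L = cycleTridiag η`, the circulant with symbol `1 + η² - η (z + z⁻¹)`. On `ℤ` it inverts
the kernel `η^|i-j|` up to the factor `1 - η²`, since `j ↦ η^j` satisfies
`(1 + η²) a_j = η (a_{j-1} + a_{j+1})`. On the cycle the small-arc kernel obeys the same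
recurrence except within one step of the antipode, so `L M = (1 - η²) I + E` with all entries of
`E` at most `2 η^((n-3)/2)`. For `M x = t x`, comparing `xᵀ L M x = t xᵀ L x` with
`0 ≤ xᵀ L x ≤ (1 + η)² |x|²` gives `t (1 + η)² ≥ 1 - η² - 2 n η^((n-3)/2)`, and for
`ρ ≥ C n^(-δ)` the error term is `O(n e^(-ρ n / 4)) < ρ / 6`.
-/

open Matrix Finset Filter Real Topology

section QuadraticForm

variable {ι : Type*} [Fintype ι]

lemma abs_dotProduct_mulVec_le {E : Matrix ι ι ℝ} {ε : ℝ} (hE : ∀ i j, |E i j| ≤ ε)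
    (x : ι → ℝ) : |x ⬝ᵥ E *ᵥ x| ≤ Fintype.card ι * ε * (x ⬝ᵥ x) := by
  rcases isEmpty_or_nonempty ι with hι | ⟨⟨i₀⟩⟩
  · simp
  have hε : 0 ≤ ε := (abs_nonneg _).trans (hE i₀ i₀)
  calc |x ⬝ᵥ E *ᵥ x| = |∑ i, ∑ j, E i j * (x i * x j)| := by
        simp only [dotProduct, mulVec, mul_sum]
        congr 1
        exact sum_congr rfl fun i _ => sum_congr rfl fun j _ => by ring
    _ ≤ ∑ i, ∑ j, ε * (|x i| * |x j|) := by
        refine (abs_sum_le_sum_abs _ _).trans (sum_le_sum fun i _ => ?_)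
        refine (abs_sum_le_sum_abs _ _).trans (sum_le_sum fun j _ => ?_)
        rw [abs_mul, abs_mul]
        exact mul_le_mul_of_nonneg_right (hE i j) (by positivity)
    _ = ε * (∑ i, |x i|) ^ 2 := by
        rw [sq, sum_mul_sum, mul_sum]
        simp only [mul_sum]
    _ ≤ ε * (Fintype.card ι * ∑ i, |x i| ^ 2) :=
        mul_le_mul_of_nonneg_left sq_sum_le_card_mul_sum_sq hε
    _ = Fintype.card ι * ε * (x ⬝ᵥ x) := by
        simp only [sq_abs, dotProduct, ← sq]
        ring

variable [DecidableEq ι]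

theorem sub_card_mul_le_mul_of_hasEigenvalue {M L E : Matrix ι ι ℝ} {c ε β t : ℝ}
    (hLM : L * M = c • 1 + E) (hE : ∀ i j, |E i j| ≤ ε)
    (hL_nonneg : ∀ x, 0 ≤ x ⬝ᵥ L *ᵥ x) (hL_le : ∀ x, x ⬝ᵥ L *ᵥ x ≤ β * (x ⬝ᵥ x))
    (hc : Fintype.card ι * ε < c) (ht : Module.End.HasEigenvalue (toLin' M) t) :
    c - Fintype.card ι * ε ≤ t * β := by
  obtain ⟨x, hx⟩ := ht.exists_hasEigenvector
  have hMx : M *ᵥ x = t • x := by simpa using hx.apply_eq_smul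
  have hX : 0 < x ⬝ᵥ x := by
    refine lt_of_le_of_ne (Fintype.sum_nonneg fun i => mul_self_nonneg (x i)) (Ne.symm ?_)
    exact dotProduct_self_eq_zero.not.mpr hx.2
  have hQ := hL_nonneg x
  have hLMx : x ⬝ᵥ (L * M) *ᵥ x = t * (x ⬝ᵥ L *ᵥ x) := by
    rw [← mulVec_mulVec, hMx, mulVec_smul, dotProduct_smul, smul_eq_mul]
  have hlower : (c - Fintype.card ι * ε) * (x ⬝ᵥ x) ≤ t * (x ⬝ᵥ L *ᵥ x) := by
    rw [← hLMx, hLM, add_mulVec, smul_mulVec, one_mulVec, dotProduct_add,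
      dotProduct_smul, smul_eq_mul]
    linarith [(abs_le.mp (abs_dotProduct_mulVec_le hE x)).1]
  have hpos : 0 < t * (x ⬝ᵥ L *ᵥ x) := (mul_pos (by linarith) hX).trans_le hlower
  have ht0 : 0 < t := pos_of_mul_pos_left hpos hQ
  refine le_of_mul_le_mul_right ?_ hX
  calc (c - Fintype.card ι * ε) * (x ⬝ᵥ x) ≤ t * (x ⬝ᵥ L *ᵥ x) := hlower
    _ ≤ t * (β * (x ⬝ᵥ x)) := mul_le_mul_of_nonneg_left (hL_le x) ht0.le
    _ = t * β * (x ⬝ᵥ x) := by ring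

end QuadraticForm

lemma circulant_single_one_mulVec {ι : Type*} [Fintype ι] [AddCommGroup ι] [DecidableEq ι]
    (a : ι) (v : ι → ℝ) : circulant (Pi.single a 1) *ᵥ v = fun i => v (i - a) := by
  ext i
  have h : ∀ j, i - j = a ↔ j = i - a := fun j => by constructor <;> rintro rfl <;> abel
  simp [mulVec, dotProduct, circulant_apply, Pi.single_apply, h]

def smallArcProfile (n : ℕ) (η : ℝ) (k : Fin n) : ℝ := η ^ min (k : ℕ) (n - k)

lemma circulant_smallArcProfile_apply {n : ℕ} (η : ℝ) (i j : Fin n) :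
    circulant (smallArcProfile n η) i j =
      η ^ min ((i : ℤ) - (j : ℤ)).natAbs (n - ((i : ℤ) - (j : ℤ)).natAbs) := by
  have h := Fin.intCast_val_sub_eq_sub_add_ite i j
  rw [circulant_apply, smallArcProfile]
  congr 1
  split_ifs at h <;> omega

lemma abs_second_difference_pow_min_le {n k : ℕ} (hk : 0 < k) (hkn : k < n) {η : ℝ} (h0 : 0 ≤ η)
    (h1 : η ≤ 1) :
    |(1 + η ^ 2) * η ^ min k (n - k)
        - η * (η ^ min (k + 1) (n - (k + 1)) + η ^ min (k - 1) (n - (k - 1)))|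
      ≤ 2 * η ^ ((n - 3) / 2) := by
  have hvanish : ∀ j, (1 + η ^ 2) * η ^ (j + 1) - η * (η ^ (j + 2) + η ^ j) = 0 :=
    fun j => by ring
  have hq : 0 ≤ 2 * η ^ ((n - 3) / 2) := by positivity
  -- away from the antipode, both neighbours of `k` lie on the same arc as `k`
  rcases le_or_gt (2 * (k + 1)) n with hlow | hlow
  · rw [show min k (n - k) = (k - 1) + 1 by omega,
      show min (k + 1) (n - (k + 1)) = (k - 1) + 2 by omega,
      show min (k - 1) (n - (k - 1)) = k - 1 by omega, hvanish, abs_zero]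
    exact hq
  rcases le_or_gt n (2 * (k - 1)) with hhigh | hhigh
  · rw [show min k (n - k) = (n - k - 1) + 1 by omega,
      show min (k + 1) (n - (k + 1)) = n - k - 1 by omega,
      show min (k - 1) (n - (k - 1)) = (n - k - 1) + 2 by omega, add_comm (η ^ (n - k - 1)),
      hvanish, abs_zero]
    exact hq
  have hpow : ∀ a, (n - 3) / 2 ≤ a → η ^ a ≤ η ^ ((n - 3) / 2) :=
    fun a ha => pow_le_pow_of_le_one h0 h1 ha
  refine abs_sub_le_of_nonneg_of_le (by positivity) ?_ (by positivity) ?_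
  · have hη2 : η ^ 2 ≤ 1 := pow_le_one₀ h0 h1
    nlinarith [hpow (min k (n - k)) (by omega),
      mul_le_mul_of_nonneg_right hη2 (pow_nonneg h0 (min k (n - k)))]
  · rw [mul_add, ← pow_succ', ← pow_succ', two_mul]
    exact add_le_add (hpow _ (by omega)) (hpow _ (by omega))

section Cycle

variable {n : ℕ} [NeZero n]

def cycleTridiag (η : ℝ) : Matrix (Fin n) (Fin n) ℝ :=
  circulant ((1 + η ^ 2) • Pi.single 0 1 - η • (Pi.single (-1) 1 + Pi.single 1 1))

lemma cycleTridiag_mulVec_apply (η : ℝ) (v : Fin n → ℝ) (i : Fin n) :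
    (cycleTridiag η *ᵥ v) i = (1 + η ^ 2) * v i - η * (v (i + 1) + v (i - 1)) := by
  simp [cycleTridiag, circulant_sub, circulant_add, circulant_smul, sub_mulVec, add_mulVec,
    smul_mulVec, circulant_single_one_mulVec, mul_add]

lemma sum_comp_add_one (f : Fin n → ℝ) : ∑ i, f (i + 1) = ∑ i, f i :=
  Fintype.sum_equiv (Equiv.addRight 1) _ _ fun _ => rfl

lemma dotProduct_cycleTridiag_mulVec (η : ℝ) (x : Fin n → ℝ) :
    x ⬝ᵥ cycleTridiag η *ᵥ x = ∑ i, (x i - η * x (i + 1)) ^ 2 := by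
  have hprod : ∑ i, x i * x (i - 1) = ∑ i, x i * x (i + 1) := by
    rw [← sum_comp_add_one]
    simp [mul_comm]
  have h : ∀ i, x i * ((1 + η ^ 2) * x i - η * (x (i + 1) + x (i - 1))) =
      (x i - η * x (i + 1)) ^ 2 + (η ^ 2 * (x i ^ 2 - x (i + 1) ^ 2)
        + η * (x i * x (i + 1) - x i * x (i - 1))) := fun i => by ring
  simp only [dotProduct, cycleTridiag_mulVec_apply, h, sum_add_distrib, ← mul_sum,
    sum_sub_distrib, sum_comp_add_one (fun i => x i ^ 2), hprod, sub_self, mul_zero, add_zero]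

lemma dotProduct_cycleTridiag_mulVec_le {η : ℝ} (hη : 0 ≤ η) (x : Fin n → ℝ) :
    x ⬝ᵥ cycleTridiag η *ᵥ x ≤ (1 + η) ^ 2 * (x ⬝ᵥ x) := by
  rw [dotProduct_cycleTridiag_mulVec]
  calc ∑ i, (x i - η * x (i + 1)) ^ 2 ≤ ∑ i, (1 + η) * (x i ^ 2 + η * x (i + 1) ^ 2) :=
        sum_le_sum fun i _ => by nlinarith [mul_nonneg hη (sq_nonneg (x i + x (i + 1)))]
    _ = (1 + η) ^ 2 * (x ⬝ᵥ x) := by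
        simp only [mul_add, sum_add_distrib, ← mul_sum, sum_comp_add_one (fun i => x i ^ 2),
          dotProduct, ← sq]
        ring

lemma cycleTridiag_mulVec_smallArcProfile_zero (hn : 2 ≤ n) (η : ℝ) :
    (cycleTridiag η *ᵥ smallArcProfile n η) 0 = 1 - η ^ 2 := by
  obtain ⟨m, rfl⟩ : ∃ m, n = m + 2 := ⟨n - 2, by omega⟩
  rw [cycleTridiag_mulVec_apply]
  simp [smallArcProfile, Fin.coe_neg_one]
  ring

lemma cycleTridiag_mulVec_smallArcProfile_of_ne_zero (η : ℝ) {k : Fin n} (hk : k ≠ 0) :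
    (cycleTridiag η *ᵥ smallArcProfile n η) k = (1 + η ^ 2) * η ^ min (k : ℕ) (n - k)
        - η * (η ^ min (k + 1 : ℕ) (n - (k + 1)) + η ^ min (k - 1 : ℕ) (n - (k - 1))) := by
  have hsucc : min ((k + 1 : Fin n) : ℕ) (n - (k + 1 : Fin n)) = min (k + 1 : ℕ) (n - (k + 1)) := by
    rcases lt_or_eq_of_le (show (k : ℕ) + 1 ≤ n from k.isLt) with h | h
    · rw [Fin.val_add_one_of_lt' h]
    · have hk1 : k + 1 = 0 :=
        Fin.ext (by rw [Fin.val_add, Fin.val_one', Nat.add_mod_mod, h, Nat.mod_self]; rfl)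
      rw [hk1, h]
      simp
  rw [cycleTridiag_mulVec_apply, smallArcProfile, smallArcProfile, smallArcProfile, hsucc,
    Fin.val_sub_one_of_ne_zero hk]

lemma cycleTridiag_mul_circulant_smallArcProfile (η : ℝ) :
    cycleTridiag η * circulant (smallArcProfile n η) = (1 - η ^ 2) • 1 +
      circulant (cycleTridiag η *ᵥ smallArcProfile n η - (1 - η ^ 2) • Pi.single 0 1) := by
  rw [cycleTridiag, circulant_mul, ← cycleTridiag, circulant_sub, circulant_smul,
    circulant_single_one, add_sub_cancel]

lemma abs_cycleTridiag_mulVec_smallArcProfile_sub_le (hn : 2 ≤ n) {η : ℝ} (h0 : 0 ≤ η)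
    (h1 : η ≤ 1) (k : Fin n) :
    |(cycleTridiag η *ᵥ smallArcProfile n η - (1 - η ^ 2) • (Pi.single 0 1 : Fin n → ℝ)) k|
      ≤ 2 * η ^ ((n - 3) / 2) := by
  by_cases hk : k = 0
  · subst hk
    simp only [Pi.sub_apply, Pi.smul_apply, Pi.single_eq_same, smul_eq_mul, mul_one,
      cycleTridiag_mulVec_smallArcProfile_zero hn, sub_self, abs_zero]
    positivity
  · simp only [Pi.sub_apply, Pi.smul_apply, Pi.single_eq_of_ne hk, smul_zero, sub_zero,
      cycleTridiag_mulVec_smallArcProfile_of_ne_zero η hk]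
    exact abs_second_difference_pow_min_le (Fin.pos_iff_ne_zero.mpr hk) k.isLt h0 h1

theorem sub_le_mul_of_hasEigenvalue_circulant_smallArcProfile (hn : 2 ≤ n) {η t : ℝ} (h0 : 0 ≤ η)
    (h1 : η ≤ 1) (hsmall : n * (2 * η ^ ((n - 3) / 2)) < 1 - η ^ 2)
    (ht : Module.End.HasEigenvalue (toLin' (circulant (smallArcProfile n η))) t) :
    1 - η ^ 2 - n * (2 * η ^ ((n - 3) / 2)) ≤ t * (1 + η) ^ 2 := by
  simpa using sub_card_mul_le_mul_of_hasEigenvalue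
    (cycleTridiag_mul_circulant_smallArcProfile η)
    (fun i j => abs_cycleTridiag_mulVec_smallArcProfile_sub_le hn h0 h1 (i - j))
    (fun x => by rw [dotProduct_cycleTridiag_mulVec]; positivity)
    (dotProduct_cycleTridiag_mulVec_le h0) (by simpa using hsmall) ht

end Cycle

lemma tendsto_rpow_mul_exp_neg_mul_rpow_atTop_nhds_zero (s : ℝ) {a b : ℝ} (ha : 0 < a)
    (hb : 0 < b) : Tendsto (fun x : ℝ => x ^ s * exp (-b * x ^ a)) atTop (𝓝 0) := by
  refine ((tendsto_rpow_mul_exp_neg_mul_atTop_nhds_zero (s / a) b hb).comp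
    (tendsto_rpow_atTop ha)).congr' ?_
  filter_upwards [eventually_ge_atTop 0] with x hx
  simp only [Function.comp_apply, ← rpow_mul hx, mul_div_cancel₀ s ha.ne']

lemma eventually_mul_one_sub_pow_lt {δ C : ℝ} (hδ : δ < 1) (hC : 0 < C) :
    ∀ᶠ n : ℕ in atTop, ∀ ρ : ℝ, 0 < ρ → ρ ≤ 1 → C * (n : ℝ) ^ (-δ) ≤ ρ →
      12 * n * (1 - ρ) ^ ((n - 3) / 2) < ρ := by
  have hlim := ((tendsto_rpow_mul_exp_neg_mul_rpow_atTop_nhds_zero (1 + δ) (sub_pos.2 hδ)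
    (by positivity : 0 < C / 4)).const_mul 12).comp tendsto_natCast_atTop_atTop
  rw [mul_zero] at hlim
  filter_upwards [hlim.eventually_lt_const hC, eventually_ge_atTop 8] with n hlt hn8 ρ hρ0 hρ1 hρC
  have hnpos : (0 : ℝ) < n := by positivity
  have hq : (n : ℝ) ≤ 4 * ((n - 3) / 2 : ℕ) := by exact_mod_cast (by omega : n ≤ 4 * ((n - 3) / 2))
  have hexp : (1 - ρ) ^ ((n - 3) / 2) ≤ exp (-(C / 4) * (n : ℝ) ^ (1 - δ)) := by
    calc (1 - ρ) ^ ((n - 3) / 2) ≤ exp (-ρ) ^ ((n - 3) / 2) :=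
          pow_le_pow_left₀ (by linarith) (by linarith [add_one_le_exp (-ρ)]) _
      _ = exp (-(ρ * ((n - 3) / 2 : ℕ))) := by rw [← exp_nat_mul]; ring_nf
      _ ≤ exp (-(C / 4) * (n : ℝ) ^ (1 - δ)) := by
          rw [exp_le_exp, sub_eq_neg_add, rpow_add hnpos, rpow_one]
          nlinarith [mul_le_mul_of_nonneg_right hρC hnpos.le,
            mul_le_mul_of_nonneg_left hq hρ0.le]
  have hsplit : (n : ℝ) = (n : ℝ) ^ (1 + δ) * (n : ℝ) ^ (-δ) := by
    rw [← rpow_add hnpos, add_neg_cancel_right, rpow_one]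
  calc 12 * n * (1 - ρ) ^ ((n - 3) / 2)
      ≤ 12 * n * exp (-(C / 4) * (n : ℝ) ^ (1 - δ)) := by gcongr
    _ = 12 * ((n : ℝ) ^ (1 + δ) * exp (-(C / 4) * (n : ℝ) ^ (1 - δ))) * (n : ℝ) ^ (-δ) := by
        nth_rw 1 [hsplit]; ring
    _ < C * (n : ℝ) ^ (-δ) := mul_lt_mul_of_pos_right hlt (rpow_pos_of_pos hnpos _)
    _ ≤ ρ := hρC

/-- For every `δ ∈ (0,1)` and `C > 0` there is `N` such that for all
`n ≥ N` and `ρ ∈ (0,1]` with `ρ ≥ C·n^{−δ}`, setting `η = 1 − ρ`, every eigenvalue of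
the `n×n` symmetric circulant matrix `M` with entries
`M_{ij} = η^{min(|i−j|, n−|i−j|)}` is strictly greater than `ρ/3`. -/
theorem min_eigenvalue_small_arc_circulant
    (δ : ℝ) (hδ : δ ∈ Set.Ioo (0 : ℝ) 1) (C : ℝ) (hC : 0 < C) :
    ∃ N : ℕ, ∀ n : ℕ, N ≤ n → ∀ ρ η : ℝ, 0 < ρ → ρ ≤ 1 →
      C * (n : ℝ) ^ (-δ) ≤ ρ → η = 1 - ρ →
      ∀ M : Matrix (Fin n) (Fin n) ℝ,
        (∀ i j, M i j =
          η ^ (min (((i : ℤ) - (j : ℤ)).natAbs) (n - ((i : ℤ) - (j : ℤ)).natAbs))) →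
        ∀ t : ℝ, Module.End.HasEigenvalue (Matrix.toLin' M) t → ρ / 3 < t := by
  obtain ⟨N, hN⟩ := eventually_atTop.mp
    ((eventually_mul_one_sub_pow_lt hδ.2 hC).and (eventually_ge_atTop 2))
  refine ⟨N, fun n hn ρ η hρ0 hρ1 hρC hη M hM t ht => ?_⟩
  obtain ⟨hsmall, hn2⟩ := hN n hn
  have : NeZero n := ⟨by omega⟩
  have hMc : M = circulant (smallArcProfile n η) := by
    ext i j
    rw [hM, circulant_smallArcProfile_apply]
  subst hη hMc
  have hε := hsmall ρ hρ0 hρ1 hρC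
  have hbound := sub_le_mul_of_hasEigenvalue_circulant_smallArcProfile hn2 (by linarith)
    (by linarith) (by nlinarith) ht
  have hlower : ρ * (2 - ρ) - ρ / 6 ≤ t * (2 - ρ) ^ 2 := by
    ring_nf at hbound ⊢
    linarith
  by_contra! hle
  nlinarith [mul_le_mul_of_nonneg_right hle (sq_nonneg (2 - ρ)), mul_pos hρ0 hρ0,
    mul_nonneg hρ0.le (sub_nonneg.2 hρ1)]
end

section
/- Let n ∈ ℕ with n ≥ 1, let ρ ∈ (0,1] and η = 1 − ρ, and let A(n,η) be the n×n matrix with entries A(n,η)_{ij} = η^{|i−j|}. Let δ > 0 and let z ∈ ℝ^n satisfy Σ_{i=0}^{n−1} z_i = 0 and ‖z‖_∞ ≤ δ. Then |νᵀ · A(n,η) · z| ≤ 2δ/(n ρ²), where ν = (1/n, …, 1/n). -/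
/-!
Column `j` of `A(n,η)` sums to `(1 + η - η^(j+1) - η^(n-j)) / ρ`. The constant part
`(1 + η) / ρ` is annihilated by `∑ z = 0`, so only the boundary terms `η^(j+1) + η^(n-j)`
survive; weighted by `|z j| ≤ δ` they contribute at most `δ` times twice the geometric series
`∑ η^(k+1) ≤ η / ρ ≤ 1 / ρ`.
-/

open Finset

section PathColumnSums

variable {R : Type*}

theorem one_sub_mul_sum_pow_natAbs_sub [CommRing R] (η : R) {n j : ℕ} (hj : j < n) :
    (1 - η) * ∑ i ∈ range n, η ^ ((i : ℤ) - j).natAbs = 1 + η - (η ^ (j + 1) + η ^ (n - j)) := by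
  obtain ⟨m, rfl⟩ : ∃ m, n = j + 1 + m := ⟨n - (j + 1), by omega⟩
  have hleft : ∑ i ∈ range (j + 1), η ^ ((i : ℤ) - j).natAbs = ∑ k ∈ range (j + 1), η ^ k := by
    rw [← sum_range_reflect]
    refine sum_congr rfl fun i hi => ?_
    rw [mem_range] at hi
    congr 1
    omega
  have hright : ∑ x ∈ range m, η ^ (((j + 1 + x : ℕ) : ℤ) - j).natAbs
      = η * ∑ k ∈ range m, η ^ k := by
    rw [mul_sum]
    refine sum_congr rfl fun x _ => ?_
    rw [← pow_succ']
    congr 1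
    omega
  rw [sum_range_add, hleft, hright, show j + 1 + m - j = m + 1 by omega, mul_add,
    mul_left_comm, mul_neg_geom_sum, mul_neg_geom_sum]
  ring

theorem one_sub_mul_sum_boundary_le [CommRing R] [LinearOrder R] [IsStrictOrderedRing R]
    {η : R} (hη0 : 0 ≤ η) (hη1 : η ≤ 1) (n : ℕ) :
    (1 - η) * ∑ j ∈ range n, (η ^ (j + 1) + η ^ (n - j)) ≤ 2 := by
  have hreflect : ∑ j ∈ range n, η ^ (n - j) = ∑ j ∈ range n, η ^ (j + 1) := by
    rw [← sum_range_reflect]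
    refine sum_congr rfl fun j hj => ?_
    rw [mem_range] at hj
    congr 1
    omega
  have hgeom : (1 - η) * ∑ j ∈ range n, η ^ (j + 1) = η * (1 - η ^ n) := by
    simp_rw [pow_succ', ← mul_sum, mul_left_comm, mul_neg_geom_sum]
  rw [sum_add_distrib, hreflect, mul_add, hgeom]
  have : 0 ≤ η ^ n := pow_nonneg hη0 n
  nlinarith

end PathColumnSums

theorem abs_sum_mul_le_of_abs_le {ι R : Type*} [CommRing R] [LinearOrder R] [IsStrictOrderedRing R]
    {s : Finset ι} {w z : ι → R} {δ : R} (hw : ∀ i ∈ s, 0 ≤ w i) (hz : ∀ i ∈ s, |z i| ≤ δ) :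
    |∑ i ∈ s, w i * z i| ≤ δ * ∑ i ∈ s, w i := by
  rw [mul_sum]
  refine (abs_sum_le_sum_abs _ _).trans (sum_le_sum fun i hi => ?_)
  rw [abs_mul, abs_of_nonneg (hw i hi), mul_comm]
  exact mul_le_mul_of_nonneg_right (hz i hi) (hw i hi)

theorem cross_term_bound_path_general
    (n : ℕ) (ρ η : ℝ) (hρ0 : 0 < ρ) (hρ1 : ρ ≤ 1) (hη : η = 1 - ρ)
    (δ : ℝ) (hδ : 0 < δ) (z : Fin n → ℝ)
    (hz0 : ∑ i, z i = 0) (hzinf : ∀ i, |z i| ≤ δ) :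
    |∑ i : Fin n, ∑ j : Fin n,
        (1 / n : ℝ) * η ^ (((i : ℤ) - (j : ℤ)).natAbs) * z j|
      ≤ 2 * δ / (n * ρ ^ 2) := by
  have hρη : 1 - η = ρ := by rw [hη]; ring
  have hη0 : 0 ≤ η := by linarith
  set w : Fin n → ℝ := fun j => η ^ ((j : ℕ) + 1) + η ^ (n - j)
  have hcol (j : Fin n) : ρ * ∑ i : Fin n, η ^ ((i : ℤ) - j).natAbs = 1 + η - w j := by
    rw [← hρη, Fin.sum_univ_eq_sum_range (fun i => η ^ ((i : ℤ) - j).natAbs)]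
    exact one_sub_mul_sum_pow_natAbs_sub η j.2
  set S := ∑ i : Fin n, ∑ j : Fin n, (1 / n : ℝ) * η ^ ((i : ℤ) - j).natAbs * z j
  have hcross : ρ * S = -(1 / n) * ∑ j, w j * z j := by
    calc ρ * S = (1 / n) * ∑ j : Fin n, (ρ * ∑ i : Fin n, η ^ ((i : ℤ) - j).natAbs) * z j := by
          simp only [S, mul_sum, sum_mul]
          rw [sum_comm]
          exact sum_congr rfl fun j _ => sum_congr rfl fun i _ => by ring
      _ = -(1 / n) * ∑ j, w j * z j := by
          simp only [hcol, sub_mul, sum_sub_distrib, ← mul_sum, hz0]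
          ring
  have hw : |∑ j, w j * z j| ≤ δ * (2 / ρ) := by
    refine (abs_sum_mul_le_of_abs_le (fun j _ => by positivity) fun j _ => hzinf j).trans ?_
    refine mul_le_mul_of_nonneg_left ?_ hδ.le
    rw [le_div_iff₀' hρ0, ← hρη, Fin.sum_univ_eq_sum_range (fun j => η ^ (j + 1) + η ^ (n - j))]
    exact one_sub_mul_sum_boundary_le hη0 (by linarith) n
  refine le_of_mul_le_mul_left ?_ hρ0
  calc ρ * |S| = |ρ * S| := by rw [abs_mul, abs_of_pos hρ0]
    _ = (1 / n) * |∑ j, w j * z j| := by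
        rw [hcross, abs_mul, abs_neg, abs_of_nonneg (by positivity)]
    _ ≤ (1 / n) * (δ * (2 / ρ)) := by gcongr
    _ = ρ * (2 * δ / (n * ρ ^ 2)) := by field_simp

/-- For the expected join matrix `A(n,η)` of the path,
`A_{ij} = η^{|i−j|}` with `η = 1 − ρ`, and any `z ∈ ℝ^n` with `Σ z_i = 0` and
`‖z‖_∞ ≤ δ`, the cross term satisfies `|νᵀ A z| ≤ 2δ/(nρ²)`, where `ν` is the
uniform vector `(1/n,…,1/n)`. -/
theorem cross_term_bound_path
    (n : ℕ) (hn : 1 ≤ n) (ρ η : ℝ) (hρ0 : 0 < ρ) (hρ1 : ρ ≤ 1) (hη : η = 1 - ρ)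
    (δ : ℝ) (hδ : 0 < δ) (z : Fin n → ℝ)
    (hz0 : ∑ i, z i = 0) (hzinf : ∀ i, |z i| ≤ δ) :
    |∑ i : Fin n, ∑ j : Fin n,
        (1 / n : ℝ) * η ^ (((i : ℤ) - (j : ℤ)).natAbs) * z j|
      ≤ 2 * δ / (n * ρ ^ 2) :=
  cross_term_bound_path_general n ρ η hρ0 hρ1 hη δ hδ z hz0 hzinf
end

section
/- Let C > 0, let n ∈ ℕ with n ≥ 2, let ρ ∈ (0,1] and η = 1 − ρ, let ε > 0, and let m be a real number with 8C·log(n)/(ρ³ ε²) ≤ m ≤ C·n·log(n). Let μ be a probability vector on {0,…,n−1} with ‖μ‖_∞ ≤ C·log(n)/m, and set z = μ − ν where ν = (1/n,…,1/n). Then |2·νᵀ · A(n,η) · z| ≤ ε² ρ/(2n). -/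
/-!
The column sums of `A(n,η)` are explicit: `(1 - η) ∑ᵢ η^|i-j| = 1 + η - η^(j+1) - η^(n-j)`.
Since `z = μ - ν` sums to zero, the constant part `1 + η` is invisible to `z`, and only the
boundary terms `η^(j+1) + η^(n-j)` survive; they add up to at most `2/ρ`. Together with
`|z_j| ≤ C log n / m ≤ ρ³ε²/8` (from below because `1/n ≤ C log n / m`), this
gives `ρ² |∑ᵢⱼ η^|i-j| z_j| ≤ ρ³ε²/4`.
-/

open Finset

theorem mul_sum_range_pow_natAbs_sub {R : Type*} [CommRing R] (x : R) {n j : ℕ} (hj : j ≤ n) :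
    (1 - x) * ∑ i ∈ range n, x ^ ((i : ℤ) - j).natAbs = 1 + x - x ^ (j + 1) - x ^ (n - j) := by
  have below : ∑ i ∈ range j, x ^ ((i : ℤ) - j).natAbs = x * ∑ d ∈ range j, x ^ d := by
    rw [mul_sum, ← sum_range_reflect]
    refine sum_congr rfl fun i hi => ?_
    rw [← pow_succ']
    congr 1
    have := mem_range.mp hi
    omega
  have above : ∑ i ∈ Ico j n, x ^ ((i : ℤ) - j).natAbs = ∑ d ∈ range (n - j), x ^ d := by
    rw [sum_Ico_eq_sum_range]
    refine sum_congr rfl fun d _ => ?_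
    congr 1
    omega
  rw [← sum_range_add_sum_Ico _ hj, below, above, mul_add, mul_left_comm, mul_neg_geom_sum,
    mul_neg_geom_sum]
  ring

theorem mul_sum_fin_pow_natAbs_sub {R : Type*} [CommRing R] (x : R) {n : ℕ} (j : Fin n) :
    (1 - x) * ∑ i : Fin n, x ^ ((i : ℤ) - j).natAbs = 1 + x - x ^ ((j : ℕ) + 1) - x ^ (n - j) := by
  rw [Fin.sum_univ_eq_sum_range (fun i => x ^ ((i : ℤ) - j).natAbs),
    mul_sum_range_pow_natAbs_sub x j.isLt.le]

theorem mul_sum_fin_pow_succ {R : Type*} [CommRing R] (x : R) (n : ℕ) :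
    (1 - x) * ∑ j : Fin n, x ^ ((j : ℕ) + 1) = x * (1 - x ^ n) := by
  simp_rw [Fin.sum_univ_eq_sum_range (fun j => x ^ (j + 1)), pow_succ', ← mul_sum, mul_left_comm,
    mul_neg_geom_sum]

theorem sum_fin_sub_eq_sum_fin_succ {R : Type*} [AddCommMonoid R] (f : ℕ → R) (n : ℕ) :
    ∑ j : Fin n, f (n - (j : ℕ)) = ∑ j : Fin n, f ((j : ℕ) + 1) := by
  rw [← Equiv.sum_comp Fin.revPerm]
  refine sum_congr rfl fun j _ => ?_
  rw [Fin.revPerm_apply, Fin.val_rev]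
  congr 1
  omega

theorem sq_mul_abs_sum_pow_natAbs_mul_le {R : Type*} [CommRing R] [LinearOrder R]
    [IsStrictOrderedRing R] {η B : R} (hη0 : 0 ≤ η) (hη1 : η ≤ 1) (hB : 0 ≤ B)
    {n : ℕ} (z : Fin n → R) (hz : ∑ j, z j = 0) (hzB : ∀ j, |z j| ≤ B) :
    (1 - η) ^ 2 * |∑ i : Fin n, ∑ j : Fin n, η ^ ((i : ℤ) - j).natAbs * z j| ≤ 2 * B := by
  set w : Fin n → R := fun j => η ^ ((j : ℕ) + 1) + η ^ (n - j)
  have hw : ∀ j, 0 ≤ w j := fun j => by positivity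
  have centred : (1 - η) * ∑ i : Fin n, ∑ j : Fin n, η ^ ((i : ℤ) - j).natAbs * z j
      = -∑ j, w j * z j := by
    calc _ = ∑ j, ((1 + η) * z j - w j * z j) := by
          rw [sum_comm, mul_sum]
          refine sum_congr rfl fun j _ => ?_
          rw [← sum_mul, ← mul_assoc, mul_sum_fin_pow_natAbs_sub]
          ring
      _ = -∑ j, w j * z j := by rw [sum_sub_distrib, ← mul_sum, hz]; ring
  have weights : (1 - η) * ∑ j, w j ≤ 2 := by
    simp only [w, sum_add_distrib, sum_fin_sub_eq_sum_fin_succ (η ^ ·), mul_add,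
      mul_sum_fin_pow_succ]
    nlinarith [pow_nonneg hη0 n]
  calc (1 - η) ^ 2 * |∑ i : Fin n, ∑ j : Fin n, η ^ ((i : ℤ) - j).natAbs * z j|
      = (1 - η) * |∑ j, w j * z j| := by
        rw [sq, mul_assoc, ← abs_of_nonneg (sub_nonneg.2 hη1), ← abs_mul, centred, abs_neg,
          abs_of_nonneg (sub_nonneg.2 hη1)]
    _ ≤ (1 - η) * ∑ j, w j * B := by
        gcongr
        refine (abs_sum_le_sum_abs _ _).trans (sum_le_sum fun j _ => ?_)
        rw [abs_mul, abs_of_nonneg (hw j)]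
        exact mul_le_mul_of_nonneg_left (hzB j) (hw j)
    _ = (1 - η) * (∑ j, w j) * B := by rw [← sum_mul, mul_assoc]
    _ ≤ 2 * B := by gcongr

/-- Let `A(n,η)` be the expected join matrix of the path,
`A_{ij} = η^{|i−j|}`, `η = 1 − ρ`.  If `8C log n/(ρ³ε²) ≤ m ≤ C n log n` and `μ` is a
probability vector with `‖μ‖_∞ ≤ C log n / m`, then with `z = μ − ν` (`ν` uniform),
`|2·νᵀ A z| ≤ ε²ρ/(2n)`. -/
theorem cross_term_small_path
    (C : ℝ) (hC : 0 < C) (n : ℕ) (hn : 2 ≤ n)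
    (ρ η : ℝ) (hρ0 : 0 < ρ) (hρ1 : ρ ≤ 1) (hη : η = 1 - ρ)
    (ε : ℝ) (hε : 0 < ε) (m : ℝ)
    (hm1 : 8 * C * Real.log n / (ρ ^ 3 * ε ^ 2) ≤ m)
    (hm2 : m ≤ C * n * Real.log n)
    (μ : Fin n → ℝ) (hμ0 : ∀ i, 0 ≤ μ i) (hμ1 : ∑ i, μ i = 1)
    (hμinf : ∀ i, μ i ≤ C * Real.log n / m) :
    |2 * ∑ i : Fin n, ∑ j : Fin n,
        (1 / n : ℝ) * η ^ (((i : ℤ) - (j : ℤ)).natAbs) * (μ j - 1 / n)|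
      ≤ ε ^ 2 * ρ / (2 * n) := by
  have hn0 : (0 : ℝ) < n := by positivity
  have hlog : 0 < Real.log n := Real.log_pos (by exact_mod_cast hn)
  have hm0 : 0 < m := lt_of_lt_of_le (by positivity) hm1
  have hB_small : 2 * (C * Real.log n / m) ≤ ρ ^ 3 * ε ^ 2 / 4 := by
    rw [div_le_iff₀ (by positivity)] at hm1
    rw [mul_div_assoc', div_le_iff₀ hm0]
    linarith
  have hB_large : 1 / n ≤ C * Real.log n / m := by
    rw [div_le_div_iff₀ hn0 hm0]
    linarith
  have hz : ∑ j, (μ j - 1 / n) = 0 := by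
    rw [sum_sub_distrib, hμ1, sum_const, card_univ, Fintype.card_fin, nsmul_eq_mul]
    field_simp
    ring
  have hzB : ∀ j, |μ j - 1 / n| ≤ C * Real.log n / m := fun j =>
    abs_le.2 ⟨by linarith [hμ0 j], by linarith [hμinf j, one_div_pos.2 hn0]⟩
  subst hη
  set T := ∑ i : Fin n, ∑ j : Fin n, (1 - ρ) ^ ((i : ℤ) - j).natAbs * (μ j - 1 / n)
  have hT : |T| ≤ ε ^ 2 * ρ / 4 := by
    have key := sq_mul_abs_sum_pow_natAbs_mul_le (by linarith : 0 ≤ 1 - ρ) (by linarith)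
      ((one_div_pos.2 hn0).le.trans hB_large) _ hz hzB
    rw [sub_sub_cancel] at key
    refine le_of_mul_le_mul_left ?_ (pow_pos hρ0 2)
    linarith
  calc _ = 2 * (1 / n * |T|) := by
        simp_rw [T, mul_assoc, ← mul_sum, abs_mul, abs_two, abs_of_pos (one_div_pos.2 hn0)]
    _ ≤ 2 * (1 / n * (ε ^ 2 * ρ / 4)) := by gcongr
    _ = ε ^ 2 * ρ / (2 * n) := by field_simp; ring
end

section
/- Let n ∈ ℕ with n ≥ 1, let ρ ∈ (0,1] and η = 1 − ρ, and let ε > 0. Let μ be a probability vector on {0,…,n−1} with total variation distance from the uniform distribution greater than ε, i.e. (1/2)·Σ_i |μ_i − 1/n| > ε, and set z = μ − ν where ν = (1/n,…,1/n). Then μᵀ A(n,η) μ > νᵀ A(n,η) ν + (ρ/8)·‖z‖₂² + ε² ρ/(2n) + 2·νᵀ A(n,η) z. -/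
open scoped BigOperators

private noncomputable def vAux (η : ℝ) (z : ℕ → ℝ) : ℕ → ℝ
  | 0 => 0
  | (i+1) => η * vAux η z i + z i

private lemma vAux_sum (η : ℝ) (z : ℕ → ℝ) (n : ℕ) :
    η * vAux η z n = ∑ j ∈ Finset.range n, η ^ (n - j) * z j := by
  induction n with
  | zero => simp [vAux]
  | succ n ih =>
      rw [Finset.sum_range_succ]
      have h : ∀ j ∈ Finset.range n, η ^ (n + 1 - j) * z j = η * (η ^ (n - j) * z j) := by
        intro j hj
        have hj' : j < n := Finset.mem_range.mp hj
        have : n + 1 - j = (n - j) + 1 := by omega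
        rw [this, pow_succ]; ring
      rw [Finset.sum_congr rfl h, ← Finset.mul_sum, ← ih]
      have : n + 1 - n = 1 := by omega
      rw [this]
      simp [vAux]; ring

private lemma quad_eq (η : ℝ) (z : ℕ → ℝ) (n : ℕ) :
    ∑ i ∈ Finset.range n, ∑ j ∈ Finset.range n,
      η ^ (((i : ℤ) - (j : ℤ)).natAbs) * z i * z j
    = ∑ i ∈ Finset.range n, ((vAux η z (i+1))^2 - η^2 * (vAux η z i)^2) := by
  induction n with
  | zero => simp
  | succ n ih =>
      rw [Finset.sum_range_succ (f := fun i => ∑ j ∈ Finset.range (n+1),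
        η ^ (((i : ℤ) - (j : ℤ)).natAbs) * z i * z j)]
      have hinner : ∀ i : ℕ, ∑ j ∈ Finset.range (n+1),
          η ^ (((i : ℤ) - (j : ℤ)).natAbs) * z i * z j
          = (∑ j ∈ Finset.range n, η ^ (((i : ℤ) - (j : ℤ)).natAbs) * z i * z j)
            + η ^ (((i : ℤ) - (n : ℤ)).natAbs) * z i * z n := fun i =>
        Finset.sum_range_succ _ n
      rw [Finset.sum_congr rfl (fun i _ => hinner i), Finset.sum_add_distrib, ih,
        Finset.sum_range_succ]
      have h1 : ∀ i ∈ Finset.range n,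
          η ^ (((i : ℤ) - (n : ℤ)).natAbs) * z i * z n = η ^ (n - i) * z i * z n := by
        intro i hi
        have hi' : i < n := Finset.mem_range.mp hi
        have : ((i : ℤ) - (n : ℤ)).natAbs = n - i := by omega
        rw [this]
      have h2 : ∀ j ∈ Finset.range n,
          η ^ (((n : ℤ) - (j : ℤ)).natAbs) * z n * z j = η ^ (n - j) * z j * z n := by
        intro j hj
        have hj' : j < n := Finset.mem_range.mp hj
        have : ((n : ℤ) - (j : ℤ)).natAbs = n - j := by omega
        rw [this]; ring
      rw [Finset.sum_congr rfl h1, Finset.sum_congr rfl h2]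
      have hs : ∑ i ∈ Finset.range n, η ^ (n - i) * z i * z n
          = (η * vAux η z n) * z n := by
        rw [vAux_sum, Finset.sum_mul]
      rw [hs]
      have hnn : ((n : ℤ) - (n : ℤ)).natAbs = 0 := by omega
      have hv : vAux η z (n+1) = η * vAux η z n + z n := rfl
      rw [hnn, pow_zero, Finset.sum_range_succ, hv]
      ring

private lemma quad_lb (η : ℝ) (hη0 : 0 ≤ η) (hη1 : η ≤ 1) (z : ℕ → ℝ) (n : ℕ) :
    (1 - η^2)/4 * ∑ i ∈ Finset.range n, (z i)^2
    ≤ ∑ i ∈ Finset.range n, ∑ j ∈ Finset.range n,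
        η ^ (((i : ℤ) - (j : ℤ)).natAbs) * z i * z j := by
  rw [quad_eq]
  set v := vAux η z with hv
  have hsub : ∀ i ∈ Finset.range n, ((v (i+1))^2 - η^2 * (v i)^2)
      = (v (i+1))^2 - η^2 * (v i)^2 := fun _ _ => rfl
  rw [Finset.sum_sub_distrib, ← Finset.mul_sum]
  set T := ∑ i ∈ Finset.range n, (v (i+1))^2 with hT
  set U := ∑ i ∈ Finset.range n, (v i)^2 with hU
  have hUT : U + (v n)^2 = T := by
    have h1 : U + (v n)^2 = ∑ i ∈ Finset.range (n+1), (v i)^2 := by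
      rw [Finset.sum_range_succ]
    have h2 : ∑ i ∈ Finset.range (n+1), (v i)^2 = (v 0)^2 + T := by
      rw [Finset.sum_range_succ' (fun i => (v i)^2) n]; ring
    have h0 : v 0 = 0 := rfl
    rw [h1, h2, h0]; ring
  have hUleT : U ≤ T := by nlinarith [sq_nonneg (v n)]
  have hη2 : η^2 ≤ 1 := by nlinarith
  have hzle : ∑ i ∈ Finset.range n, (z i)^2 ≤ 2 * T + 2 * U := by
    have : ∀ i ∈ Finset.range n, (z i)^2 ≤ 2 * (v (i+1))^2 + 2 * (v i)^2 := by
      intro i _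
      have hz : z i = v (i+1) - η * v i := by
        show z i = (η * v i + z i) - η * v i; ring
      rw [hz]
      have hb : 0 ≤ (1 - η^2) * (v i)^2 := mul_nonneg (by nlinarith) (sq_nonneg _)
      nlinarith [sq_nonneg (v (i+1) + η * v i), hb]
    calc ∑ i ∈ Finset.range n, (z i)^2
        ≤ ∑ i ∈ Finset.range n, (2 * (v (i+1))^2 + 2 * (v i)^2) :=
          Finset.sum_le_sum this
      _ = 2 * T + 2 * U := by rw [Finset.sum_add_distrib, ← Finset.mul_sum, ← Finset.mul_sum]
  have hTnn : 0 ≤ T := Finset.sum_nonneg fun i _ => sq_nonneg _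
  nlinarith [hUleT, hzle, hTnn, sq_nonneg η]

set_option maxHeartbeats 1000000 in
/-- Let `A(n,η)` be the expected join matrix of the path,
`A_{ij} = η^{|i−j|}`, `η = 1 − ρ`.  If `μ` is a probability vector whose total
variation distance from uniform exceeds `ε`, then with `z = μ − ν` (`ν` uniform),
`μᵀ A μ > νᵀ A ν + (ρ/8)·‖z‖₂² + ε²ρ/(2n) + 2·νᵀ A z`. -/
theorem separation_general_form_path
    (n : ℕ) (hn : 1 ≤ n) (ρ η : ℝ) (hρ0 : 0 < ρ) (hρ1 : ρ ≤ 1) (hη : η = 1 - ρ)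
    (ε : ℝ) (hε : 0 < ε)
    (μ : Fin n → ℝ) (hμ0 : ∀ i, 0 ≤ μ i) (hμ1 : ∑ i, μ i = 1)
    (hTV : ε < (1 / 2) * ∑ i, |μ i - 1 / n|)
    (A : Matrix (Fin n) (Fin n) ℝ)
    (hA : ∀ i j, A i j = η ^ (((i : ℤ) - (j : ℤ)).natAbs)) :
    (∑ i, ∑ j, (1 / n : ℝ) * A i j * (1 / n))
        + (ρ / 8) * ∑ i, (μ i - 1 / n) ^ 2
        + ε ^ 2 * ρ / (2 * n)
        + 2 * ∑ i, ∑ j, (1 / n : ℝ) * A i j * (μ j - 1 / n)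
      < ∑ i, ∑ j, μ i * A i j * μ j := by
  have hn0 : (0 : ℝ) < n := by exact_mod_cast hn
  set z : Fin n → ℝ := fun i => μ i - 1 / n with hz
  have hsymm : ∀ i j, A i j = A j i := by
    intro i j
    rw [hA, hA, ← Int.natAbs_neg ((i : ℤ) - (j : ℤ)), neg_sub]
  -- cross term symmetry
  have cross : ∑ i, ∑ j, z i * A i j * (1 / n : ℝ)
      = ∑ i, ∑ j, (1 / n : ℝ) * A i j * z j := by
    rw [Finset.sum_comm]
    exact Finset.sum_congr rfl fun i _ => Finset.sum_congr rfl fun j _ => by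
      rw [hsymm j i]; ring
  have key : ∑ i, ∑ j, μ i * A i j * μ j
      = (∑ i, ∑ j, (1 / n : ℝ) * A i j * (1 / n))
        + 2 * (∑ i, ∑ j, (1 / n : ℝ) * A i j * z j)
        + ∑ i, ∑ j, z i * A i j * z j := by
    have expand : ∀ i j, μ i * A i j * μ j
        = (1 / n : ℝ) * A i j * (1 / n) + (1 / n) * A i j * z j
          + z i * A i j * (1 / n) + z i * A i j * z j := by
      intro i j
      simp only [hz]
      ring
    calc ∑ i, ∑ j, μ i * A i j * μ j
        = ∑ i, ∑ j, ((1 / n : ℝ) * A i j * (1 / n) + (1 / n) * A i j * z j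
          + z i * A i j * (1 / n) + z i * A i j * z j) :=
          Finset.sum_congr rfl fun i _ => Finset.sum_congr rfl fun j _ => expand i j
      _ = (∑ i, ∑ j, (1 / n : ℝ) * A i j * (1 / n))
          + (∑ i, ∑ j, (1 / n : ℝ) * A i j * z j)
          + (∑ i, ∑ j, z i * A i j * (1 / n))
          + ∑ i, ∑ j, z i * A i j * z j := by
          simp only [Finset.sum_add_distrib]
      _ = _ := by rw [cross]; ring
  -- lower bound on zᵀAz via range sums
  set z' : ℕ → ℝ := fun k => if h : k < n then z ⟨k, h⟩ else 0 with hz'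
  have hzz : ∑ i, ∑ j, z i * A i j * z j
      = ∑ i ∈ Finset.range n, ∑ j ∈ Finset.range n,
          η ^ (((i : ℤ) - (j : ℤ)).natAbs) * z' i * z' j := by
    rw [← Fin.sum_univ_eq_sum_range]
    refine Finset.sum_congr rfl fun i _ => ?_
    rw [← Fin.sum_univ_eq_sum_range]
    refine Finset.sum_congr rfl fun j _ => ?_
    rw [hA]
    have h1 : z' (i : ℕ) = z i := by simp [hz']
    have h2 : z' (j : ℕ) = z j := by simp [hz']
    rw [h1, h2]
    ring
  have hzsq : ∑ i, (z i)^2 = ∑ i ∈ Finset.range n, (z' i)^2 := by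
    rw [← Fin.sum_univ_eq_sum_range]
    refine Finset.sum_congr rfl fun i _ => ?_
    simp [hz']
  have hη0 : 0 ≤ η := by rw [hη]; linarith
  have hη1 : η ≤ 1 := by rw [hη]; linarith
  have hquad : (1 - η^2)/4 * ∑ i, (z i)^2 ≤ ∑ i, ∑ j, z i * A i j * z j := by
    rw [hzz, hzsq]
    exact quad_lb η hη0 hη1 z' n
  -- Cauchy–Schwarz: (∑ |z i|)² ≤ n * ∑ z i²
  have hCS : (∑ i, |z i|)^2 ≤ (n : ℝ) * ∑ i, (z i)^2 := by
    have h := sq_sum_le_card_mul_sum_sq (s := Finset.univ) (f := fun i : Fin n => |z i|)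
    simpa [sq_abs, Finset.card_univ] using h
  have hTV' : 2 * ε < ∑ i, |z i| := by
    have : ∑ i, |z i| = ∑ i, |μ i - 1 / n| := rfl
    rw [this]; linarith
  have hS : 4 * ε^2 < (n : ℝ) * ∑ i, (z i)^2 := by
    have h1 : (2 * ε)^2 ≤ (∑ i, |z i|)^2 := by
      have h2 : 0 ≤ 2 * ε := by linarith
      nlinarith [hTV']
    nlinarith [hCS, hTV', hε]
  have hSnn : 0 ≤ ∑ i, (z i)^2 := Finset.sum_nonneg fun i _ => sq_nonneg _
  have hfrac : ε ^ 2 * ρ / (2 * n) < ρ / 8 * ∑ i, (z i)^2 := by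
    rw [div_lt_iff₀ (by positivity)]
    nlinarith [hS, hρ0, hSnn, hn0]
  have hη2 : (1 - η^2)/4 * ∑ i, (z i)^2 ≥ ρ / 4 * ∑ i, (z i)^2 := by
    have : ρ ≤ 1 - η^2 := by rw [hη]; nlinarith
    nlinarith [hSnn]
  rw [key]
  have hgoal : ρ / 8 * ∑ i, (z i)^2 + ε ^ 2 * ρ / (2 * n)
      < ∑ i, ∑ j, z i * A i j * z j := by
    nlinarith [hquad, hη2, hfrac, hSnn, hρ0]
  have hzeq : ∀ i, (μ i - 1 / n)^2 = (z i)^2 := fun i => rfl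
  simp only [hzeq]
  have hzeq2 : (∑ i, ∑ j, (1 / n : ℝ) * A i j * (μ j - 1 / n))
      = ∑ i, ∑ j, (1 / n : ℝ) * A i j * z j := rfl
  rw [hzeq2]
  linarith [hgoal]
end

section
/- Let n ∈ ℕ with n ≥ 1, let ρ ∈ (0,1], let t > 0, and let μ be a probability vector on {0,…,n−1}. Define the relative concentration Γ^{ρ,t}(μ) = max over intervals I of μ[I] / max{ρ·(|I|−1), t}. Then there exists an interval I satisfying both ρ·(|I|−1) ≤ t and μ[I] ≥ (1/2)·t·Γ^{ρ,t}(μ). -/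
/-!
Let `I = [a, b]` attain `Γ = Γ^{ρ,t}(μ)`. If `ρ (|I| - 1) ≤ t`, then `μ[I] = t Γ` already.
Otherwise `μ[I] = Γ ρ L` with `L = b - a` and `ρ L > t`. Cut `I` into `N = ⌊L / k⌋ + 1` consecutive
blocks of `k = ⌊t / ρ⌋ + 1` points, each of which is short (`ρ (k - 1) ≤ t`); by pigeonhole one
block carries at least `μ[I] / N`, and `t N < 2 ρ L` because `ρ k > t` and `ρ L > t`.
-/

open scoped BigOperators

/-- The relative concentration `Γ^{ρ,t}(μ)` of a probability vector `μ` on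
`{0,…,n−1}`: the maximum over intervals `I = {a,…,b}` of
`μ[I] / max{ρ·(|I|−1), t}`. -/
noncomputable def relConc (n : ℕ) (ρ t : ℝ) (μ : Fin n → ℝ) : ℝ :=
  sSup {r : ℝ | ∃ a b : Fin n, a ≤ b ∧
    r = (∑ s ∈ Finset.Icc a b, μ s) / max (ρ * (((b : ℕ) - (a : ℕ) : ℕ) : ℝ)) t}

open Finset

theorem exists_relConc_eq {n : ℕ} (hn : 0 < n) (ρ t : ℝ) (μ : Fin n → ℝ) :
    ∃ a b : Fin n, a ≤ b ∧
      relConc n ρ t μ = (∑ s ∈ Icc a b, μ s) / max (ρ * (((b : ℕ) - (a : ℕ) : ℕ) : ℝ)) t := by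
  let ratio (p : Fin n × Fin n) : ℝ :=
    (∑ s ∈ Icc p.1 p.2, μ s) / max (ρ * (((p.2 : ℕ) - (p.1 : ℕ) : ℕ) : ℝ)) t
  have hfinite : {r : ℝ | ∃ a b : Fin n, a ≤ b ∧ r = ratio (a, b)}.Finite :=
    (Set.finite_range ratio).subset fun _ ⟨a, b, _, hr⟩ => ⟨(a, b), hr.symm⟩
  have hnonempty : {r : ℝ | ∃ a b : Fin n, a ≤ b ∧ r = ratio (a, b)}.Nonempty :=
    ⟨_, ⟨0, hn⟩, ⟨0, hn⟩, le_rfl, rfl⟩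
  exact hnonempty.csSup_mem hfinite

theorem exists_short_Ico_sum_le_mul {f : ℕ → ℝ} (hf : ∀ i, 0 ≤ f i) (k : ℕ) :
    ∀ (N : ℕ) {a b : ℕ}, a < b → b ≤ a + N * k →
      ∃ c d, a ≤ c ∧ c < d ∧ d ≤ b ∧ d ≤ c + k ∧
        ∑ i ∈ Ico a b, f i ≤ N * ∑ i ∈ Ico c d, f i
  | 0, a, b, hab, hb => by omega
  | N + 1, a, b, hab, hb => by
    have hmass (c d : ℕ) : 0 ≤ ∑ i ∈ Ico c d, f i := sum_nonneg fun i _ => hf i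
    by_cases hshort : b ≤ a + k
    · refine ⟨a, b, le_rfl, hab, le_rfl, hshort, ?_⟩
      push_cast
      nlinarith [hmass a b]
    obtain ⟨c, d, hac, hcd, hdb, hdc, hrest⟩ :=
      exists_short_Ico_sum_le_mul hf k N (a := a + k) (b := b) (by omega)
        (by rw [add_mul, one_mul] at hb; omega)
    rw [← sum_Ico_consecutive f (by omega : a ≤ a + k) (by omega : a + k ≤ b)]
    push_cast
    rcases le_total (∑ i ∈ Ico a (a + k), f i) (∑ i ∈ Ico c d, f i) with hle | hle
    · exact ⟨c, d, by omega, hcd, hdb, hdc, by linarith⟩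
    · refine ⟨a, a + k, le_rfl, by omega, by omega, le_rfl, ?_⟩
      nlinarith [mul_le_mul_of_nonneg_left hle (Nat.cast_nonneg (α := ℝ) N)]

/-- Blocks of `k = ⌊t / ρ⌋ + 1` points are short, and `N = ⌊L / k⌋ + 1` of them cover `L + 1`
points. -/
theorem exists_block_size {ρ t : ℝ} {L : ℕ} (ht : 0 < t) (hlong : t < ρ * L) :
    ∃ k N : ℕ, ρ * ((k - 1 : ℕ) : ℝ) ≤ t ∧ L + 1 ≤ N * k ∧ t * N < 2 * (ρ * L) := by
  have hρ : 0 < ρ := pos_of_mul_pos_left (ht.trans hlong) L.cast_nonneg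
  have hL : (0 : ℝ) < L := pos_of_mul_pos_right (ht.trans hlong) hρ.le
  set k := ⌊t / ρ⌋₊ + 1 with hk
  have hk0 : 0 < k := Nat.succ_pos _
  have hρk : t < ρ * k := by
    have := Nat.lt_floor_add_one (t / ρ)
    rw [div_lt_iff₀ hρ] at this
    push_cast [hk]
    linarith
  refine ⟨k, L / k + 1, ?_, ?_, ?_⟩
  · calc ρ * ((k - 1 : ℕ) : ℝ) = ρ * ⌊t / ρ⌋₊ := by simp [hk]
      _ ≤ ρ * (t / ρ) := by gcongr; exact Nat.floor_le (by positivity)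
      _ = t := by field_simp
  · have := Nat.lt_div_mul_add (a := L) hk0
    rw [add_mul, one_mul]
    omega
  · have hquot : t * ((L / k : ℕ) : ℝ) < ρ * L :=
      calc t * ((L / k : ℕ) : ℝ) ≤ t * (L / k) := by gcongr; exact Nat.cast_div_le
        _ < ρ * L := by
          rw [mul_div_assoc', div_lt_iff₀ (by positivity)]
          linarith [mul_lt_mul_of_pos_right hρk hL]
    push_cast
    linarith

def extendByZero {M : Type*} [Zero M] {n : ℕ} (μ : Fin n → M) (i : ℕ) : M :=
  if h : i < n then μ ⟨i, h⟩ else 0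

theorem extendByZero_nonneg {M : Type*} [Zero M] [Preorder M] {n : ℕ} {μ : Fin n → M}
    (hμ : ∀ i, 0 ≤ μ i) (i : ℕ) : 0 ≤ extendByZero μ i := by
  unfold extendByZero
  split_ifs
  exacts [hμ _, le_rfl]

theorem sum_Icc_eq_sum_Ico_extendByZero {M : Type*} [AddCommMonoid M] {n : ℕ} (μ : Fin n → M)
    (a b : Fin n) : ∑ s ∈ Icc a b, μ s = ∑ i ∈ Ico (a : ℕ) (b + 1), extendByZero μ i := by
  rw [Ico_add_one_right_eq_Icc, ← Fin.map_valEmbedding_Icc, sum_map]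
  exact sum_congr rfl fun s _ => by simp [extendByZero]

theorem exists_short_interval_of_long {n : ℕ} {μ : Fin n → ℝ} (hμ : ∀ i, 0 ≤ μ i) {ρ t : ℝ}
    (ht : 0 < t) {a b : Fin n} (hab : a ≤ b) (hlong : t < ρ * (((b : ℕ) - (a : ℕ) : ℕ) : ℝ)) :
    ∃ c d : Fin n, c ≤ d ∧ ρ * (((d : ℕ) - (c : ℕ) : ℕ) : ℝ) ≤ t ∧
      t * ∑ s ∈ Icc a b, μ s ≤
        2 * (ρ * (((b : ℕ) - (a : ℕ) : ℕ) : ℝ)) * ∑ s ∈ Icc c d, μ s := by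
  have hρ : 0 < ρ := pos_of_mul_pos_left (ht.trans hlong) (Nat.cast_nonneg _)
  obtain ⟨k, N, hk, hcover, hN⟩ := exists_block_size ht hlong
  have hab' : (a : ℕ) ≤ b := hab
  obtain ⟨c, d, hac, hcd, hdb, hdc, hsum⟩ :=
    exists_short_Ico_sum_le_mul (extendByZero_nonneg hμ) k N (a := a) (b := b + 1)
      (by omega) (by omega)
  have hd : d - 1 < n := by omega
  refine ⟨⟨c, by omega⟩, ⟨d - 1, hd⟩, Fin.mk_le_mk.mpr (by omega), ?_, ?_⟩
  · calc ρ * ((d - 1 - c : ℕ) : ℝ) ≤ ρ * ((k - 1 : ℕ) : ℝ) :=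
        mul_le_mul_of_nonneg_left (Nat.cast_le.mpr (by omega)) hρ.le
      _ ≤ t := hk
  · have hblock : ∑ s ∈ Icc (⟨c, by omega⟩ : Fin n) ⟨d - 1, hd⟩, μ s =
        ∑ i ∈ Ico c d, extendByZero μ i := by
      rw [sum_Icc_eq_sum_Ico_extendByZero, Fin.val_mk, Fin.val_mk, Nat.sub_add_cancel (by omega)]
    have hmass : 0 ≤ ∑ i ∈ Ico c d, extendByZero μ i :=
      sum_nonneg fun i _ => extendByZero_nonneg hμ i
    rw [hblock, sum_Icc_eq_sum_Ico_extendByZero]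
    calc t * ∑ i ∈ Ico (a : ℕ) (b + 1), extendByZero μ i
        ≤ t * N * ∑ i ∈ Ico c d, extendByZero μ i := by
          rw [mul_assoc]; exact mul_le_mul_of_nonneg_left hsum ht.le
      _ ≤ _ := mul_le_mul_of_nonneg_right hN.le hmass

theorem relative_concentration_structural_general
    (n : ℕ) (hn : 1 ≤ n) (ρ t : ℝ) (ht : 0 < t)
    (μ : Fin n → ℝ) (hμ0 : ∀ i, 0 ≤ μ i) :
    ∃ a b : Fin n, a ≤ b ∧
      ρ * (((b : ℕ) - (a : ℕ) : ℕ) : ℝ) ≤ t ∧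
      (1 / 2) * t * relConc n ρ t μ ≤ ∑ s ∈ Finset.Icc a b, μ s := by
  obtain ⟨a, b, hab, hΓ⟩ := exists_relConc_eq hn ρ t μ
  have hmass : 0 ≤ ∑ s ∈ Icc a b, μ s := sum_nonneg fun s _ => hμ0 s
  rcases le_or_gt (ρ * (((b : ℕ) - (a : ℕ) : ℕ) : ℝ)) t with hshort | hlong
  · refine ⟨a, b, hab, hshort, ?_⟩
    rw [hΓ, max_eq_right hshort]
    calc 1 / 2 * t * ((∑ s ∈ Icc a b, μ s) / t) = (∑ s ∈ Icc a b, μ s) / 2 := by field_simp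
      _ ≤ _ := by linarith
  · obtain ⟨c, d, hcd, hshort, hblock⟩ := exists_short_interval_of_long hμ0 ht hab hlong
    refine ⟨c, d, hcd, hshort, ?_⟩
    have hρL := ht.trans hlong
    rw [hΓ, max_eq_left hlong.le]
    calc 1 / 2 * t * ((∑ s ∈ Icc a b, μ s) / (ρ * (((b : ℕ) - (a : ℕ) : ℕ) : ℝ)))
        = (t * ∑ s ∈ Icc a b, μ s) / (2 * (ρ * (((b : ℕ) - (a : ℕ) : ℕ) : ℝ))) := by
          field_simp
      _ ≤ _ := by rw [div_le_iff₀ (by positivity)]; linarith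

/-- For every probability vector `μ` on `{0,…,n−1}` there is an
interval `I = {a,…,b}` with `ρ·(|I|−1) ≤ t` and `μ[I] ≥ (1/2)·t·Γ^{ρ,t}(μ)`. -/
theorem relative_concentration_structural
    (n : ℕ) (hn : 1 ≤ n) (ρ t : ℝ) (hρ0 : 0 < ρ) (hρ1 : ρ ≤ 1) (ht : 0 < t)
    (μ : Fin n → ℝ) (hμ0 : ∀ i, 0 ≤ μ i) (hμ1 : ∑ i, μ i = 1) :
    ∃ a b : Fin n, a ≤ b ∧
      ρ * (((b : ℕ) - (a : ℕ) : ℕ) : ℝ) ≤ t ∧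
      (1 / 2) * t * relConc n ρ t μ ≤ ∑ s ∈ Finset.Icc a b, μ s :=
  relative_concentration_structural_general n hn ρ t ht μ hμ0
end
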